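/- arXiv:2411.05637 — 5 statements merged into one kernel-verified Lean document; each statement's English description precedes it below -/
import Mathlib

section
/- Suppose a ∈ C²(ℝ) satisfies a' > 0 and a'' > 0 on ℝ, and F satisfies F' = a. Let N ≥ 6 and X = {X_1,…,X_N} ⊂ K_a be a set of N distinct points with X_i = P(u_i, v_i). Assume that for every i = 1,…,N there exist constants λ₁^i, λ₂^i ∈ ℝ such that for all j = 1,…,N: h_j^i·a^i(r_j^i) = λ₁^i·h_j^i + λ₂^i·a^i(r_j^i) and (h_j^i)²/2 + F^i(r_j^i) = λ₁^i·r_j^i + λ₂^i·h_j^i. Then X does not have an order that forms a T_N configuration. -/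
open Matrix

noncomputable section

/-- The map `P(u,v)` into `ℝ^{3×2}` from the paper. -/
def Pmat (a F : ℝ → ℝ) (u v : ℝ) : Matrix (Fin 3) (Fin 2) ℝ :=
  !![u, v; a v, u; u * a v, u ^ 2 / 2 + F v]

/-- The ordered family `X` forms a `T_N` configuration. -/
def IsTNConfig {m n N : ℕ} (X : Fin N → Matrix (Fin m) (Fin n) ℝ) : Prop :=
  4 ≤ N ∧ Function.Injective X ∧
    (∀ i j, i ≠ j → (X i - X j).rank ≠ 1) ∧
    ∃ (B : Matrix (Fin m) (Fin n) ℝ) (C : Fin N → Matrix (Fin m) (Fin n) ℝ)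
      (κ : Fin N → ℝ),
      (∀ i, 1 < κ i) ∧ (∀ i, (C i).rank = 1) ∧ (∑ i, C i = 0) ∧
      ∀ i, X i = B + (∑ j ∈ Finset.univ.filter (fun j => j < i), C j) + κ i • C i

/-- The family `X` has an order (enumeration) that forms a `T_N` configuration. -/
def HasTNOrder {m n N : ℕ} (X : Fin N → Matrix (Fin m) (Fin n) ℝ) : Prop :=
  ∃ σ : Equiv.Perm (Fin N), IsTNConfig (X ∘ σ)

/-- The matrix `A_X - Π^N(Q) ∈ ℝ^{3 × 2N}`, with the `2N` columns indexed by
`Fin N ⊕ Fin N`: the first `N` columns are `(u_j, a(v_j), u_j a(v_j))ᵀ - (first column of Q)`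
and the last `N` columns are `(v_j, u_j, u_j²/2 + F(v_j))ᵀ - (second column of Q)`. -/
def AmatDiff (a F : ℝ → ℝ) {N : ℕ} (u v : Fin N → ℝ)
    (Q : Matrix (Fin 3) (Fin 2) ℝ) : Matrix (Fin 3) (Fin N ⊕ Fin N) ℝ :=
  Matrix.of fun i => Sum.elim
    (fun j => Pmat a F (u j) (v j) i 0 - Q i 0)
    (fun j => Pmat a F (u j) (v j) i 1 - Q i 1)

/-! ### Auxiliary material for the proof -/

open Fin.NatCast

section Aux

/-- rank of a nonzero matrix is nonzero -/
lemma aux_rank_ne_zero_of_ne_zero {M : Matrix (Fin 3) (Fin 2) ℝ} (h : M ≠ 0) : M.rank ≠ 0 := by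
  intro h0
  apply h
  rw [Matrix.rank, Submodule.finrank_eq_zero, LinearMap.range_eq_bot] at h0
  ext i j
  have := congrFun (congrFun (congrArg DFunLike.coe h0) (Pi.single j 1)) i
  simpa [Matrix.mulVecLin_apply, Matrix.mulVec, dotProduct, Pi.single_apply,
    mul_ite, Finset.sum_ite_eq'] using this

lemma aux_rank_vecMulVec_le (w : Fin 3 → ℝ) (x : Fin 2 → ℝ) : (vecMulVec w x).rank ≤ 1 := by
  rw [vecMulVec_eq Unit]
  exact (Matrix.rank_mul_le_right _ _).trans ((Matrix.rank_le_card_height _).trans (by simp))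

lemma aux_rank_eq_one_of_vecMulVec {M : Matrix (Fin 3) (Fin 2) ℝ} {w : Fin 3 → ℝ}
    {x : Fin 2 → ℝ} (hM : M = vecMulVec w x) (h : M ≠ 0) : M.rank = 1 := by
  refine le_antisymm (hM ▸ aux_rank_vecMulVec_le w x) ?_
  exact Nat.one_le_iff_ne_zero.mpr (aux_rank_ne_zero_of_ne_zero h)

lemma aux_minor_zero_of_rank_one {C : Matrix (Fin 3) (Fin 2) ℝ} (h : C.rank = 1) :
    C 0 0 * C 1 1 - C 0 1 * C 1 0 = 0 := by
  set E : Matrix (Fin 2) (Fin 3) ℝ :=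
    Matrix.of fun i k => if k = Fin.castLE (by norm_num) i then (1:ℝ) else 0 with hE
  have hS : (E * C) = Matrix.of fun i j => C (Fin.castLE (by norm_num) i) j := by
    ext i j
    simp [Matrix.mul_apply, hE, ite_mul, Finset.sum_ite_eq]
  have hrk : (E * C).rank ≤ 1 := h ▸ Matrix.rank_mul_le_right E C
  by_contra hdet
  have hu : IsUnit (E * C) := by
    rw [Matrix.isUnit_iff_isUnit_det]
    refine Ne.isUnit ?_
    rw [Matrix.det_fin_two, hS]
    simpa using hdet
  have := Matrix.rank_of_isUnit _ hu
  rw [this] at hrk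
  simp at hrk

variable {a F : ℝ → ℝ}

/-- tangent-line strict inequality from the right. -/
lemma aux_tangent_lt (ha : ContDiff ℝ 2 a) (ha'' : ∀ x : ℝ, 0 < deriv (deriv a) x)
    {x y : ℝ} (hxy : x < y) : a y - a x < (y - x) * deriv a y := by
  have hdiff : Differentiable ℝ a := ha.differentiable (by norm_num)
  obtain ⟨c, hc, hc2⟩ := exists_deriv_eq_slope a hxy hdiff.continuous.continuousOn
    (fun z _ => (hdiff z).differentiableWithinAt)
  have : deriv a c < deriv a y := strictMono_of_deriv_pos ha'' hc.2
  have hpos : 0 < y - x := by linarith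
  calc a y - a x = (y - x) * deriv a c := by rw [hc2]; field_simp
  _ < (y - x) * deriv a y := by nlinarith

/-- trapezoid strictly exceeds the integral for strictly convex `a`. -/
lemma aux_trapezoid_ineq (ha : ContDiff ℝ 2 a) (ha'' : ∀ x : ℝ, 0 < deriv (deriv a) x)
    (hF : ∀ x : ℝ, HasDerivAt F (a x) x) {x y : ℝ} (hxy : x < y) :
    0 < 2 * (F x - F y) + (y - x) * (a x + a y) := by
  have hdiff : Differentiable ℝ a := ha.differentiable (by norm_num)
  set Φ : ℝ → ℝ := fun t => 2 * (F x - F t) + (t - x) * (a x + a t) with hΦ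
  have hd : ∀ t, HasDerivAt Φ (a x - a t + (t - x) * deriv a t) t := by
    intro t
    have h1 : HasDerivAt (fun t => 2 * (F x - F t)) (2 * (0 - a t)) t :=
      (((hasDerivAt_const t (F x)).sub (hF t)).const_mul 2)
    have h2 := (((hasDerivAt_id t).sub_const x).mul
        ((hasDerivAt_const t (a x)).add (hdiff t).hasDerivAt))
    have := h1.add h2
    exact this.congr_deriv (by simp only [id, Pi.add_apply]; ring)
  have hmono : StrictMonoOn Φ (Set.Ici x) := by
    refine strictMonoOn_of_deriv_pos (convex_Ici x) ?_ ?_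
    · exact fun t _ => (hd t).continuousAt.continuousWithinAt
    · intro t ht
      rw [interior_Ici] at ht
      rw [(hd t).deriv]
      have := aux_tangent_lt ha ha'' (ht : x < t)
      linarith
  have := hmono (Set.self_mem_Ici) (Set.mem_Ici.mpr hxy.le) hxy
  have hΦx : Φ x = 0 := by simp [hΦ]
  rw [hΦx] at this
  exact this

/-- three ordered points cannot share a value of `t ↦ F t - α t`. -/
lemma aux_no_three_level (ha' : ∀ x : ℝ, 0 < deriv a x)
    (hF : ∀ x : ℝ, HasDerivAt F (a x) x) (α : ℝ) {x y z : ℝ}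
    (hxy : x < y) (hyz : y < z)
    (h1 : F x - α * x = F y - α * y) (h2 : F y - α * y = F z - α * z) : False := by
  set G : ℝ → ℝ := fun t => F t - α * t with hG
  have hd : ∀ t, HasDerivAt G (a t - α) t := fun t => by
    have h := (hF t).sub (((hasDerivAt_id t).const_mul α))
    exact h.congr_deriv (by ring)
  have hcont : Continuous G := by
    have : Differentiable ℝ G := fun t => (hd t).differentiableAt
    exact this.continuous
  obtain ⟨c₁, hc₁, hc₁2⟩ := exists_hasDerivAt_eq_slope G (fun t => a t - α) hxy
    hcont.continuousOn (fun t _ => hd t)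
  obtain ⟨c₂, hc₂, hc₂2⟩ := exists_hasDerivAt_eq_slope G (fun t => a t - α) hyz
    hcont.continuousOn (fun t _ => hd t)
  have e1 : a c₁ - α = 0 := by rw [hc₁2, show G y = G x from h1.symm]; simp
  have e2 : a c₂ - α = 0 := by rw [hc₂2, show G z = G y from h2.symm]; simp
  have hlt : c₁ < c₂ := lt_trans hc₁.2 hc₂.1
  have := strictMono_of_deriv_pos ha' hlt
  linarith

/-- three pairwise distinct points cannot share a value of `t ↦ F t - α t`. -/
lemma aux_no_three_level' (ha' : ∀ x : ℝ, 0 < deriv a x)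
    (hF : ∀ x : ℝ, HasDerivAt F (a x) x) (α : ℝ) {x y z : ℝ}
    (hxy : x ≠ y) (hxz : x ≠ z) (hyz : y ≠ z)
    (h1 : F x - α * x = F y - α * y) (h2 : F x - α * x = F z - α * z) : False := by
  rcases lt_trichotomy x y with h | h | h
  · rcases lt_trichotomy y z with h' | h' | h'
    · exact aux_no_three_level ha' hF α h h' h1 (h1.symm.trans h2)
    · exact hyz h'
    · rcases lt_trichotomy x z with h'' | h'' | h''
      · exact aux_no_three_level ha' hF α h'' h' h2 (h2.symm.trans h1)
      · exact hxz h''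
      · exact aux_no_three_level ha' hF α h'' h h2.symm h1
  · exact hxy h
  · rcases lt_trichotomy x z with h' | h' | h'
    · exact aux_no_three_level ha' hF α h h' h1.symm h2
    · exact hxz h'
    · rcases lt_trichotomy y z with h'' | h'' | h''
      · exact aux_no_three_level ha' hF α h'' h' (h1.symm.trans h2) h2.symm
      · exact hyz h''
      · exact aux_no_three_level ha' hF α h'' h (h2.symm.trans h1) h1.symm

abbrev M32 := Matrix (Fin 3) (Fin 2) ℝ

def fQ (Z M : M32) : ℝ :=
  (M 0 0 - Z 0 0) * (M 1 1 - Z 1 1) - (M 0 1 - Z 0 1) * (M 1 0 - Z 1 0)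

lemma fQ_add_smul (Z A C : M32) (t : ℝ) (hm : C 0 0 * C 1 1 - C 0 1 * C 1 0 = 0) :
    fQ Z (A + t • C) = fQ Z A +
      t * ((A 0 0 - Z 0 0) * C 1 1 + C 0 0 * (A 1 1 - Z 1 1)
        - (A 0 1 - Z 0 1) * C 1 0 - C 0 1 * (A 1 0 - Z 1 0)) := by
  simp only [fQ, Matrix.add_apply, Matrix.smul_apply, smul_eq_mul]
  linear_combination t^2 * hm

lemma aux_nat_wrap (L M : ℕ) (hM : M = L + 1) : (L + 1 % M) % M = 0 := by
  subst hM
  rcases L with _ | k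
  · simp
  · have h1 : 1 % (k + 1 + 1) = 1 := Nat.mod_eq_of_lt (by omega)
    rw [h1]
    exact Nat.mod_self _

lemma circulation {N : ℕ} [NeZero N] (Y C : Fin N → M32) (B : M32) (κ : Fin N → ℝ)
    (hκ : ∀ i, 1 < κ i)
    (hm : ∀ i, C i 0 0 * C i 1 1 - C i 0 1 * C i 1 0 = 0)
    (hsum : ∑ i, C i = 0)
    (hY : ∀ i, Y i = B + (∑ j ∈ Finset.univ.filter (fun j => j < i), C j) + κ i • C i)
    (m : Fin N) :
    ∃ w : ℕ → ℝ, (∀ i, 0 < w i) ∧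
      ∑ i ∈ Finset.range N, w i * fQ (Y m) (Y (m + (i : Fin N))) = 0 := by
  set Z := Y m with hZ
  set Q : Fin N → M32 := fun l => B + ∑ j ∈ Finset.univ.filter (fun j => j < l), C j with hQ
  have hYQ : ∀ l, Y l = Q l + κ l • C l := fun l => hY l
  have hQsucc : ∀ l : Fin N, Q (l + 1) = Q l + C l := by
    intro l
    rcases lt_or_eq_of_le (Nat.succ_le_of_lt l.isLt) with h | h
    · have hval : ((l + 1 : Fin N) : ℕ) = (l : ℕ) + 1 := by
        rw [Fin.add_def]
        simp [Nat.mod_eq_of_lt h]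
      have hfil : Finset.univ.filter (fun j => j < l + 1)
          = insert l (Finset.univ.filter (fun j => j < l)) := by
        ext j
        simp only [Finset.mem_filter, Finset.mem_univ, true_and, Finset.mem_insert]
        rw [Fin.lt_def, Fin.lt_def, hval]
        constructor
        · intro hj
          rcases Nat.lt_succ_iff_lt_or_eq.mp hj with h' | h'
          · exact Or.inr h'
          · exact Or.inl (Fin.ext h')
        · rintro (rfl | h')
          · omega
          · omega
      rw [hQ]
      simp only
      rw [hfil, Finset.sum_insert (by simp)]
      abel
    · have hl1 : (l + 1 : Fin N) = 0 := by
        apply Fin.ext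
        rw [Fin.add_def, Fin.val_one']
        simp only [Fin.val_zero]
        exact aux_nat_wrap _ _ h.symm
      have hfil0 : Finset.univ.filter (fun j => j < (0 : Fin N)) = ∅ := by
        ext j; simp [Fin.not_lt_zero]
      have hfill : Finset.univ.filter (fun j => j < l) = Finset.univ.erase l := by
        ext j
        simp only [Finset.mem_filter, Finset.mem_univ, true_and, Finset.mem_erase, and_true]
        constructor
        · intro hj; exact ne_of_lt hj
        · intro hj
          rw [Fin.lt_def]
          have := j.isLt
          have hne : (j : ℕ) ≠ (l : ℕ) := fun hc => hj (Fin.ext hc)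
          omega
      rw [hQ, hl1]
      simp only
      rw [hfil0, hfill, Finset.sum_empty]
      have := Finset.sum_erase_add Finset.univ C (Finset.mem_univ l)
      rw [hsum] at this
      rw [add_assoc, this, add_zero]
  have main : ∀ n : ℕ, ∃ ρ : ℝ, 0 < ρ ∧ ∃ w : ℕ → ℝ, (∀ i, 0 < w i) ∧
      fQ Z (Q (m + (n : Fin N))) = ρ * fQ Z (Q m)
        + ∑ i ∈ Finset.range n, w i * fQ Z (Y (m + (i : Fin N))) := by
    intro n
    induction n with
    | zero => exact ⟨1, one_pos, fun _ => 1, fun _ => one_pos, by simp⟩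
    | succ n ih =>
      obtain ⟨ρ, hρ, w, hw, hrec⟩ := ih
      set l : Fin N := m + (n : Fin N) with hl
      have hκl := hκ l
      have hκl0 : κ l ≠ 0 := by linarith
      set Lt : ℝ := (Q l 0 0 - Z 0 0) * C l 1 1 + C l 0 0 * (Q l 1 1 - Z 1 1)
        - (Q l 0 1 - Z 0 1) * C l 1 0 - C l 0 1 * (Q l 1 0 - Z 1 0) with hLt
      have e1 : fQ Z (Q l + (1:ℝ) • C l) = fQ Z (Q l) + 1 * Lt :=
        fQ_add_smul Z (Q l) (C l) 1 (hm l)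
      have e2 : fQ Z (Y l) = fQ Z (Q l) + κ l * Lt := by
        rw [hYQ l]; exact fQ_add_smul Z (Q l) (C l) (κ l) (hm l)
      have hstep : fQ Z (Q (l + 1)) = (1 - 1/κ l) * fQ Z (Q l) + (1/κ l) * fQ Z (Y l) := by
        rw [hQsucc l]
        rw [show Q l + C l = Q l + (1:ℝ) • C l by rw [one_smul]]
        rw [e1, e2]
        field_simp
        ring
      have hcast : (m + ((n+1 : ℕ) : Fin N)) = l + 1 := by
        rw [hl]
        push_cast
        exact (add_assoc _ _ _).symm
      have ht : 0 < 1 - 1/κ l := by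
        have : 1/κ l < 1 := by
          rw [div_lt_one (by linarith)]; exact hκl
        linarith
      refine ⟨(1 - 1/κ l) * ρ, mul_pos ht hρ,
        (fun i => if i = n then 1/κ l else (1 - 1/κ l) * w i), ?_, ?_⟩
      · intro i
        by_cases hi : i = n
        · simp only [hi, if_pos rfl]; exact one_div_pos.mpr (by linarith)
        · simp only [if_neg hi]; exact mul_pos ht (hw i)
      · have hsum' : ∑ x ∈ Finset.range n,
            (if x = n then 1/κ l else (1 - 1/κ l) * w x) * fQ Z (Y (m + (x : Fin N)))
            = (1 - 1/κ l) * ∑ x ∈ Finset.range n, w x * fQ Z (Y (m + (x : Fin N))) := by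
          rw [Finset.mul_sum]
          refine Finset.sum_congr rfl ?_
          intro x hx
          rw [if_neg (Nat.ne_of_lt (Finset.mem_range.mp hx))]
          ring
        rw [hcast, hstep, hrec, Finset.sum_range_succ, hsum']
        beta_reduce
        rw [if_pos rfl, ← hl]
        ring
  obtain ⟨ρ, hρ, w, hw, hrec⟩ := main N
  have hNc : ((N : ℕ) : Fin N) = 0 := Fin.natCast_self N
  rw [hNc, add_zero] at hrec
  have hQm : fQ Z (Q m) = 0 := by
    have hqz : ∀ i j, Q m i j - Z i j = -(κ m * C m i j) := by
      intro i j
      rw [hZ, hYQ m]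
      simp [Matrix.add_apply, Matrix.smul_apply]
    simp only [fQ]
    rw [hqz 0 0, hqz 1 1, hqz 0 1, hqz 1 0]
    linear_combination (κ m)^2 * hm m
  rw [hQm] at hrec
  exact ⟨w, hw, by linarith [hrec]⟩

lemma aux_exists_three {γ : Type*} [DecidableEq γ] {S : Finset γ} (h : 3 ≤ S.card) :
    ∃ x ∈ S, ∃ y ∈ S, ∃ z ∈ S, x ≠ y ∧ x ≠ z ∧ y ≠ z := by
  obtain ⟨x, hx⟩ := Finset.card_pos.mp (by omega : 0 < S.card)
  have h2 : 2 ≤ (S.erase x).card := by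
    have := Finset.card_erase_of_mem hx
    omega
  obtain ⟨y, hy⟩ := Finset.card_pos.mp (by omega : 0 < (S.erase x).card)
  have h1 : 1 ≤ ((S.erase x).erase y).card := by
    have := Finset.card_erase_of_mem hy
    omega
  obtain ⟨z, hz⟩ := Finset.card_pos.mp (by omega : 0 < ((S.erase x).erase y).card)
  refine ⟨x, hx, y, (Finset.mem_erase.mp hy).2, z,
    (Finset.mem_erase.mp (Finset.mem_erase.mp hz).2).2, ?_, ?_, ?_⟩
  · exact fun hc => (Finset.mem_erase.mp hy).1 hc.symm
  · exact fun hc => (Finset.mem_erase.mp (Finset.mem_erase.mp hz).2).1 hc.symm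
  · exact fun hc => (Finset.mem_erase.mp hz).1 hc.symm

lemma aux_vecMulVec_entries (w0 w1 w2 x0 x1 : ℝ) :
    vecMulVec ![w0,w1,w2] ![x0,x1]
      = !![w0*x0, w0*x1; w1*x0, w1*x1; w2*x0, w2*x1] := by
  ext r c
  fin_cases r <;> fin_cases c <;> simp [vecMulVec_apply]

lemma aux_mat32_ext (m00 m01 m10 m11 m20 m21 n00 n01 n10 n11 n20 n21 : ℝ)
    (h00 : m00 = n00) (h01 : m01 = n01) (h10 : m10 = n10) (h11 : m11 = n11)
    (h20 : m20 = n20) (h21 : m21 = n21) :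
    (!![m00,m01;m10,m11;m20,m21] : Matrix (Fin 3) (Fin 2) ℝ)
      = !![n00,n01;n10,n11;n20,n21] := by
  rw [h00, h01, h10, h11, h20, h21]

end Aux

open Fin.NatCast

set_option maxHeartbeats 1000000 in
/-- **Lemma 10 (key lemma for Theorem 1).** If `a ∈ C²` with `a' > 0`, `a'' > 0`,
`F' = a`, `N ≥ 6`, `X_i = P(u_i, v_i)` are `N` distinct points of `K_a`, and for every
`i` there are constants `λ₁^i, λ₂^i` with
`h_j^i a^i(r_j^i) = λ₁^i h_j^i + λ₂^i a^i(r_j^i)` and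
`(h_j^i)²/2 + F^i(r_j^i) = λ₁^i r_j^i + λ₂^i h_j^i` for all `j`
(here `h_j^i = u_j - u_i`, `r_j^i = v_j - v_i`, `a^i(r_j^i) = a(v_j) - a(v_i)`,
`F^i(r_j^i) = F(v_j) - F(v_i) - a(v_i)(v_j - v_i)`), then `X` has no order forming a
`T_N` configuration. -/
theorem stmt_9 (a F : ℝ → ℝ)
    (ha : ContDiff ℝ 2 a)
    (ha' : ∀ x : ℝ, 0 < deriv a x)
    (ha'' : ∀ x : ℝ, 0 < deriv (deriv a) x)
    (hF : ∀ x : ℝ, HasDerivAt F (a x) x)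
    (N : ℕ) (hN : 6 ≤ N)
    (u v : Fin N → ℝ)
    (X : Fin N → Matrix (Fin 3) (Fin 2) ℝ)
    (hX : ∀ i, X i = Pmat a F (u i) (v i))
    (hdist : Function.Injective X)
    (hlam : ∀ i : Fin N, ∃ l1 l2 : ℝ, ∀ j : Fin N,
      (u j - u i) * (a (v j) - a (v i)) =
        l1 * (u j - u i) + l2 * (a (v j) - a (v i)) ∧
      (u j - u i) ^ 2 / 2 + (F (v j) - F (v i) - a (v i) * (v j - v i)) =
        l1 * (v j - v i) + l2 * (u j - u i)) :
    ¬ HasTNOrder X := by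
  rintro ⟨σ, hN4, hinjY, hrankY, B, C, κ, hκ, hCrank, hCsum, hYeq⟩
  haveI : NeZero N := ⟨by omega⟩
  have hamono : StrictMono a := strictMono_of_deriv_pos ha'
  -- entries of X
  have hX00 : ∀ i, X i 0 0 = u i := fun i => by rw [hX i]; rfl
  have hX01 : ∀ i, X i 0 1 = v i := fun i => by rw [hX i]; rfl
  have hX10 : ∀ i, X i 1 0 = a (v i) := fun i => by rw [hX i]; rfl
  have hX11 : ∀ i, X i 1 1 = u i := fun i => by rw [hX i]; rfl
  have hX20 : ∀ i, X i 2 0 = u i * a (v i) := fun i => by rw [hX i]; rfl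
  have hX21 : ∀ i, X i 2 1 = u i ^ 2 / 2 + F (v i) := fun i => by rw [hX i]; rfl
  have huv : ∀ i j, u i = u j → v i = v j → i = j := by
    intro i j h1 h2
    exact hdist (by rw [hX i, hX j, h1, h2])
  -- fQ values
  have hfD : ∀ t s : Fin N, fQ (X t) (X s)
      = (u s - u t)^2 - (v s - v t) * (a (v s) - a (v t)) := by
    intro t s
    simp only [fQ, hX00, hX01, hX10, hX11]
    ring
  -- the lambda constants
  choose l1 l2 hl using hlam
  set α : Fin N → ℝ := fun i => l1 i + a (v i) with hα
  set β : Fin N → ℝ := fun i => l2 i + u i with hβ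
  have hrowA : ∀ i j, u j * a (v j) - u i * a (v i)
      = α i * (u j - u i) + β i * (a (v j) - a (v i)) := by
    intro i j
    simp only [hα, hβ]
    linear_combination (hl i j).1
  have hrowB : ∀ i j, (u j ^ 2 / 2 + F (v j)) - (u i ^ 2 / 2 + F (v i))
      = α i * (v j - v i) + β i * (u j - u i) := by
    intro i j
    simp only [hα, hβ]
    linear_combination (hl i j).2
  -- no rank-one connections among the X's
  have hrk : ∀ i j, i ≠ j → (X j - X i).rank ≠ 1 := by
    intro i j hij
    have hne : σ.symm j ≠ σ.symm i := by
      intro hc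
      apply hij
      have h2 := congrArg σ hc
      simp only [Equiv.apply_symm_apply] at h2
      exact h2.symm
    have := hrankY (σ.symm j) (σ.symm i) hne
    simpa [Function.comp] using this
  -- all the (α,β) agree
  have hαβ : ∀ i j, α i = α j ∧ β i = β j := by
    intro i j
    by_cases hij : i = j
    · exact hij ▸ ⟨rfl, rfl⟩
    by_contra hcon
    have hcon' : α i ≠ α j ∨ β i ≠ β j := by tauto
    have E1 : (α i - α j) * (u j - u i) + (β i - β j) * (a (v j) - a (v i)) = 0 := by
      linear_combination - hrowA i j - hrowA j i
    have E2 : (α i - α j) * (v j - v i) + (β i - β j) * (u j - u i) = 0 := by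
      linear_combination - hrowB i j - hrowB j i
    have hD : (u j - u i)^2 - (v j - v i) * (a (v j) - a (v i)) = 0 := by
      rcases hcon' with hc | hc
      · have h0 : (α i - α j) * ((u j - u i)^2 - (v j - v i) * (a (v j) - a (v i))) = 0 := by
          linear_combination (u j - u i) * E1 - (a (v j) - a (v i)) * E2
        rcases mul_eq_zero.mp h0 with h' | h'
        · exact absurd (by linarith) hc
        · exact h'
      · have h0 : (β i - β j) * ((u j - u i)^2 - (v j - v i) * (a (v j) - a (v i))) = 0 := by
          linear_combination (u j - u i) * E2 - (v j - v i) * E1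
        rcases mul_eq_zero.mp h0 with h' | h'
        · exact absurd (by linarith) hc
        · exact h'
    -- build a rank-one difference
    have hsub : X j - X i = !![u j - u i, v j - v i;
        a (v j) - a (v i), u j - u i;
        u j * a (v j) - u i * a (v i), (u j ^ 2 / 2 + F (v j)) - (u i ^ 2 / 2 + F (v i))] := by
      rw [hX i, hX j]
      unfold Pmat
      ext r' c'
      fin_cases r' <;> fin_cases c' <;> simp [Matrix.sub_apply]
    have hMrank : (X j - X i).rank = 1 := by
      by_cases hh : u j - u i = 0
      · have hrk0 : (v j - v i) * (a (v j) - a (v i)) = 0 := by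
          linear_combination (u j - u i) * hh - hD
        by_cases hr : v j - v i = 0
        · exact absurd (huv i j (by linarith) (by linarith)) hij
        · have hk : a (v j) - a (v i) = 0 := by
            rcases mul_eq_zero.mp hrk0 with h' | h'
            · exact absurd h' hr
            · exact h'
          refine aux_rank_eq_one_of_vecMulVec
            (w := ![v j - v i, 0, α i * (v j - v i)]) (x := ![0, 1]) ?_ ?_
          · rw [hsub, aux_vecMulVec_entries]
            refine aux_mat32_ext _ _ _ _ _ _ _ _ _ _ _ _ ?_ ?_ ?_ ?_ ?_ ?_
            · linear_combination hh
            · ring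
            · linear_combination hk
            · linear_combination hh
            · linear_combination hrowA i j + (α i) * hh + (β i) * hk
            · linear_combination hrowB i j + (β i) * hh
          · intro hcz
            rw [hsub] at hcz
            have := congrFun (congrFun hcz 0) 1
            simp at this
            exact hr (by linarith)
      · refine aux_rank_eq_one_of_vecMulVec
          (w := ![1, (a (v j) - a (v i))/(u j - u i),
            α i + β i * ((a (v j) - a (v i))/(u j - u i))]) (x := ![u j - u i, v j - v i]) ?_ ?_
        · rw [hsub, aux_vecMulVec_entries]
          refine aux_mat32_ext _ _ _ _ _ _ _ _ _ _ _ _ ?_ ?_ ?_ ?_ ?_ ?_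
          · ring
          · ring
          · rw [div_mul_cancel₀ _ hh]
          · rw [div_mul_eq_mul_div, eq_comm, div_eq_iff hh]
            linear_combination -hD
          · rw [show u j * a (v j) - u i * a (v i)
                = α i * (u j - u i) + β i * (a (v j) - a (v i)) from hrowA i j]
            field_simp
          · rw [show (u j ^ 2 / 2 + F (v j)) - (u i ^ 2 / 2 + F (v i))
                = α i * (v j - v i) + β i * (u j - u i) from hrowB i j]
            field_simp
            linear_combination (β i) * hD
        · intro hcz
          rw [hsub] at hcz
          have := congrFun (congrFun hcz 0) 0
          simp at this
          exact hh (by linarith)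
    exact hrk i j hij hMrank
  -- common constants
  set i₀ : Fin N := ⟨0, by omega⟩ with hi₀
  set A : ℝ := α i₀ with hA
  set Bc : ℝ := β i₀ with hBc
  have hrowA' : ∀ i j, u j * a (v j) - u i * a (v i)
      = A * (u j - u i) + Bc * (a (v j) - a (v i)) := by
    intro i j
    have h := hrowA i j
    rwa [(hαβ i i₀).1, (hαβ i i₀).2] at h
  have hrowB' : ∀ i j, (u j ^ 2 / 2 + F (v j)) - (u i ^ 2 / 2 + F (v i))
      = A * (v j - v i) + Bc * (u j - u i) := by
    intro i j
    have h := hrowB i j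
    rwa [(hαβ i i₀).1, (hαβ i i₀).2] at h
  set p : Fin N → ℝ := fun i => u i - Bc with hp
  set q : Fin N → ℝ := fun i => a (v i) - A with hq
  set c : ℝ := p i₀ * q i₀ with hc
  have hpq : ∀ i, p i * q i = c := by
    intro i
    simp only [hp, hq, hc]
    linear_combination hrowA' i₀ i
  have hE : ∀ i j, p i ^ 2 / 2 + F (v i) - A * v i = p j ^ 2 / 2 + F (v j) - A * v j := by
    intro i j
    simp only [hp]
    linear_combination - hrowB' i j
  by_cases hc0 : c = 0
  · -- degenerate case: at most four distinct points possible
    classical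
    set S1 : Finset (Fin N) := Finset.univ.filter (fun i => p i = 0) with hS1
    set S2 : Finset (Fin N) := Finset.univ.filter (fun i => q i = 0) with hS2
    have hcover : Finset.univ ⊆ S1 ∪ S2 := by
      intro i _
      rcases mul_eq_zero.mp (hc0 ▸ hpq i) with h' | h'
      · exact Finset.mem_union_left _ (Finset.mem_filter.mpr ⟨Finset.mem_univ i, h'⟩)
      · exact Finset.mem_union_right _ (Finset.mem_filter.mpr ⟨Finset.mem_univ i, h'⟩)
    have hcard : N ≤ S1.card + S2.card := by
      calc N = (Finset.univ : Finset (Fin N)).card := by simp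
      _ ≤ (S1 ∪ S2).card := Finset.card_le_card hcover
      _ ≤ S1.card + S2.card := Finset.card_union_le _ _
    rcases (by omega : 3 ≤ S1.card ∨ 3 ≤ S2.card) with h3 | h3
    · obtain ⟨x, hx, y, hy, z, hz, hxy, hxz, hyz⟩ := aux_exists_three h3
      have hpx : p x = 0 := (Finset.mem_filter.mp hx).2
      have hpy : p y = 0 := (Finset.mem_filter.mp hy).2
      have hpz : p z = 0 := (Finset.mem_filter.mp hz).2
      have hux : u x = u y := by have e1 : u x - Bc = 0 := hpx; have e2 : u y - Bc = 0 := hpy; linarith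
      have hux' : u x = u z := by have e1 : u x - Bc = 0 := hpx; have e2 : u z - Bc = 0 := hpz; linarith
      have hvxy : v x ≠ v y := fun hc => hxy (huv x y hux hc)
      have hvxz : v x ≠ v z := fun hc => hxz (huv x z hux' hc)
      have hvyz : v y ≠ v z := fun hc => hyz (huv y z (hux ▸ hux') hc)
      have e1 : F (v x) - A * v x = F (v y) - A * v y := by
        have h9 := hE x y; rw [hpx, hpy] at h9; norm_num at h9; linarith
      have e2 : F (v x) - A * v x = F (v z) - A * v z := by
        have h9 := hE x z; rw [hpx, hpz] at h9; norm_num at h9; linarith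
      exact aux_no_three_level' ha' hF A hvxy hvxz hvyz e1 e2
    · obtain ⟨x, hx, y, hy, z, hz, hxy, hxz, hyz⟩ := aux_exists_three h3
      have hqx : q x = 0 := (Finset.mem_filter.mp hx).2
      have hqy : q y = 0 := (Finset.mem_filter.mp hy).2
      have hqz : q z = 0 := (Finset.mem_filter.mp hz).2
      have hvxy : v x = v y := hamono.injective (by have e1 : a (v x) - A = 0 := hqx; have e2 : a (v y) - A = 0 := hqy; linarith)
      have hvxz : v x = v z := hamono.injective (by have e1 : a (v x) - A = 0 := hqx; have e2 : a (v z) - A = 0 := hqz; linarith)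
      have huxy : u x ≠ u y := fun hc => hxy (huv x y hc hvxy)
      have huxz : u x ≠ u z := fun hc => hxz (huv x z hc hvxz)
      have huyz : u y ≠ u z := fun hc => hyz (huv y z hc (hvxy ▸ hvxz))
      have e1 : p x ^ 2 = p y ^ 2 := by
        have h9 := hE x y
        rw [hvxy] at h9
        linear_combination 2 * h9
      have e2 : p x ^ 2 = p z ^ 2 := by
        have h9 := hE x z
        rw [hvxz] at h9
        linear_combination 2 * h9
      have hpxy : p x + p y = 0 := by
        have : (p x - p y) * (p x + p y) = 0 := by linear_combination e1
        rcases mul_eq_zero.mp this with h' | h'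
        · exact absurd (show u x = u y by have e : (u x - Bc) - (u y - Bc) = 0 := h'; linarith) huxy
        · exact h'
      have hpxz : p x + p z = 0 := by
        have : (p x - p z) * (p x + p z) = 0 := by linear_combination e2
        rcases mul_eq_zero.mp this with h' | h'
        · exact absurd (show u x = u z by have e : (u x - Bc) - (u z - Bc) = 0 := h'; linarith) huxz
        · exact h'
      have : p y = p z := by linarith
      exact huyz (show u y = u z by have e : (u y - Bc) = (u z - Bc) := this; linarith)
  · -- main case
    have hq0 : ∀ i, q i ≠ 0 := fun i hqi => hc0 (by rw [← hpq i, hqi, mul_zero])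
    have hqinj : ∀ i j, q i = q j → i = j := by
      intro i j hqe
      have hv : v i = v j := hamono.injective (by simp only [hq] at hqe; linarith)
      have hu : u i = u j := by
        have h1 := hpq i
        have h2 := hpq j
        rw [hqe] at h1
        have hsub : (p i - p j) * q j = 0 := by linear_combination h1 - h2
        have : p i = p j := by
          rcases mul_eq_zero.mp hsub with h' | h'
          · linarith
          · exact absurd h' (hq0 j)
        simp only [hp] at this; linarith
      exact huv i j hu hv
    -- sign rule for pairs
    have hDS : ∀ i j, i ≠ j →
        ((u j - u i)^2 - (v j - v i) * (a (v j) - a (v i))) * (q i + q j) < 0 := by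
      have key : ∀ i j, v i < v j →
          ((u j - u i)^2 - (v j - v i) * (a (v j) - a (v i))) * (q i + q j) < 0 := by
        intro i j hvij
        have hJ : 0 < 2 * (F (v i) - F (v j)) + (v j - v i) * (a (v i) + a (v j)) :=
          aux_trapezoid_ineq ha ha'' hF hvij
        have hk : 0 < q j - q i := by
          simp only [hq]
          have := hamono hvij
          linarith
        have hid : ((u j - u i)^2 - (v j - v i) * (a (v j) - a (v i))) * (q i + q j)
            = -((q j - q i) * (2 * (F (v i) - F (v j)) + (v j - v i) * (a (v i) + a (v j)))) := by
          have h1 := hpq i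
          have h2 := hpq j
          have h3 := hE i j
          simp only [hp, hq] at h1 h2 h3 ⊢
          linear_combination 2 * (u j - u i) * h2 - 2 * (u j - u i) * h1
            + 2 * (a (v j) - a (v i)) * h3
        rw [hid]
        have : 0 < (q j - q i) * (2 * (F (v i) - F (v j)) + (v j - v i) * (a (v i) + a (v j))) :=
          mul_pos hk hJ
        linarith
      intro i j hij
      have hvne : v i ≠ v j := by
        intro hc
        exact hij (hqinj i j (by simp only [hq, hc]))
      rcases lt_or_gt_of_ne hvne with h | h
      · exact key i j h
      · have := key j i h
        have hsym : ((u i - u j)^2 - (v i - v j) * (a (v i) - a (v j))) * (q j + q i)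
            = ((u j - u i)^2 - (v j - v i) * (a (v j) - a (v i))) * (q i + q j) := by ring
        rw [hsym] at this
        exact this
    -- circulation consequences
    have hminor : ∀ k, C k 0 0 * C k 1 1 - C k 0 1 * C k 1 0 = 0 := fun k =>
      aux_minor_zero_of_rank_one (hCrank k)
    have hcirc : ∀ t : Fin N, (∃ s, s ≠ t ∧ 0 < fQ (X t) (X s))
        ∧ (∃ s, s ≠ t ∧ fQ (X t) (X s) < 0) := by
      intro t
      obtain ⟨w, hw, hsum0⟩ := circulation (X ∘ σ) C B κ hκ hminor hCsum hYeq (σ.symm t)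
      have hYm : (X ∘ σ) (σ.symm t) = X t := by simp
      rw [hYm] at hsum0
      -- pick a point distinct from t
      have hNe : ∃ s₀ : Fin N, s₀ ≠ t := by
        rcases eq_or_ne t i₀ with h | h
        · exact ⟨(⟨1, by omega⟩ : Fin N), by rw [h]; simp [hi₀, Fin.ext_iff]⟩
        · exact ⟨i₀, fun hc => h hc.symm⟩
      obtain ⟨s₀, hs₀⟩ := hNe
      have hs₀ne : fQ (X t) (X s₀) ≠ 0 := by
        have := hDS t s₀ (fun hc => hs₀ (hc.symm))
        rw [← hfD t s₀] at this
        intro hc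
        rw [hc] at this
        simp at this
      have hindex : ∃ i ∈ Finset.range N, X (σ (σ.symm t + (i : Fin N))) = X s₀ := by
        refine ⟨(σ.symm s₀ - σ.symm t : Fin N).val, Finset.mem_range.mpr (Fin.is_lt _), ?_⟩
        rw [Fin.cast_val_eq_self]
        have h9 : σ.symm t + (σ.symm s₀ - σ.symm t) = σ.symm s₀ := by
          rw [add_sub_cancel]
        rw [h9, Equiv.apply_symm_apply]
      constructor
      · by_contra hno
        push_neg at hno
        have hall : ∀ i ∈ Finset.range N, w i * fQ (X t) ((X ∘ σ) (σ.symm t + (i : Fin N))) = 0 := by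
          have hnonpos : ∀ i ∈ Finset.range N,
              w i * fQ (X t) ((X ∘ σ) (σ.symm t + (i : Fin N))) ≤ 0 := by
            intro i _
            rcases eq_or_ne (σ (σ.symm t + (i : Fin N))) t with h | h
            · simp only [Function.comp_apply, h]
              rw [hfD t t]
              simp
            · have := hno (σ (σ.symm t + (i : Fin N))) h
              have hwi := hw i
              simp only [Function.comp_apply]
              nlinarith
          intro i hi
          by_contra hne
          have hlt : w i * fQ (X t) ((X ∘ σ) (σ.symm t + (i : Fin N))) < 0 :=
            lt_of_le_of_ne (hnonpos i hi) hne
          have hrest : ∑ j ∈ (Finset.range N).erase i,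
              w j * fQ (X t) ((X ∘ σ) (σ.symm t + (j : Fin N))) ≤ 0 :=
            Finset.sum_nonpos (fun j hj => hnonpos j (Finset.mem_of_mem_erase hj))
          have h8 := Finset.add_sum_erase (Finset.range N)
            (fun j => w j * fQ (X t) ((X ∘ σ) (σ.symm t + (j : Fin N)))) hi
          rw [← h8] at hsum0
          beta_reduce at hsum0
          linarith
        obtain ⟨i, hi, hXi⟩ := hindex
        have := hall i hi
        simp only [Function.comp_apply] at this hXi
        rw [hXi] at this
        rcases mul_eq_zero.mp this with h' | h'
        · exact absurd h' (ne_of_gt (hw i))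
        · exact hs₀ne h'
      · by_contra hno
        push_neg at hno
        have hall : ∀ i ∈ Finset.range N, w i * fQ (X t) ((X ∘ σ) (σ.symm t + (i : Fin N))) = 0 := by
          have hnonneg : ∀ i ∈ Finset.range N,
              0 ≤ w i * fQ (X t) ((X ∘ σ) (σ.symm t + (i : Fin N))) := by
            intro i _
            rcases eq_or_ne (σ (σ.symm t + (i : Fin N))) t with h | h
            · simp only [Function.comp_apply, h]
              rw [hfD t t]
              simp
            · have := hno (σ (σ.symm t + (i : Fin N))) h
              have hwi := hw i
              simp only [Function.comp_apply]
              nlinarith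
          exact (Finset.sum_eq_zero_iff_of_nonneg hnonneg).mp hsum0
        obtain ⟨i, hi, hXi⟩ := hindex
        have := hall i hi
        simp only [Function.comp_apply] at this hXi
        rw [hXi] at this
        rcases mul_eq_zero.mp this with h' | h'
        · exact absurd h' (ne_of_gt (hw i))
        · exact hs₀ne h'
    -- extremal points
    obtain ⟨imax, _, hmax⟩ := Finset.exists_max_image Finset.univ q ⟨i₀, Finset.mem_univ i₀⟩
    obtain ⟨imin, _, hmin⟩ := Finset.exists_min_image Finset.univ q ⟨i₀, Finset.mem_univ i₀⟩
    obtain ⟨⟨s1, hs1ne, hs1⟩, _⟩ := hcirc imax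
    obtain ⟨_, ⟨s2, hs2ne, hs2⟩⟩ := hcirc imin
    rw [hfD] at hs1 hs2
    have h1 := hDS imax s1 (fun hc => hs1ne hc.symm)
    have h2 := hDS imin s2 (fun hc => hs2ne hc.symm)
    have hq1 : q imax + q s1 < 0 := by nlinarith
    have hq2 : 0 < q imin + q s2 := by nlinarith
    have hle1 : q imin ≤ q s1 := hmin s1 (Finset.mem_univ s1)
    have hle2 : q s2 ≤ q imax := hmax s2 (Finset.mem_univ s2)
    linarith
end
end

section
/- Let a, F: ℝ → ℝ with F' = a, let X = {X_1,…,X_N} ⊂ K_a with X_i = P(u_i, v_i), and let Q ∈ ℝ^{3×2}. Then for every i = 1,…,N, rank(A_X − Π^N(X_i)) ≤ rank(A_X − Π^N(Q)). In particular, if rank(A_X − Π^N(Q)) = 2 for some Q ∈ ℝ^{3×2}, then rank(A_X − Π^N(X_i)) ≤ 2 for all i. -/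
/-!
The columns of `X_i = P(u_i, v_i)` are the `i`-th and `(N+i)`-th columns of `A_X`, so
`A_X - Π^N(X_i)` is obtained from `A_X - Π^N(Q)` by subtracting from every column one of those
two columns. That is a right multiplication by a square matrix, which cannot raise the rank.
-/

open Matrix

theorem Matrix.rank_sub_submatrix_id_le {m n R : Type*} [Fintype m] [Fintype n] [DecidableEq n]
    [CommRing R] [StrongRankCondition R] (B : Matrix m n R) (f : n → n) :
    (B - B.submatrix id f).rank ≤ B.rank := by
  have hB : B - B.submatrix id f = B * (1 - (1 : Matrix n n R).submatrix id f) := by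
    rw [Matrix.mul_sub, Matrix.mul_one]
    exact congrArg (B - ·) (mul_submatrix_one (Equiv.refl n) f B).symm
  rw [hB]
  exact rank_mul_le_left _ _

theorem AmatDiff_Pmat_eq_sub_submatrix (a F : ℝ → ℝ) {N : ℕ} (u v : Fin N → ℝ)
    (Q : Matrix (Fin 3) (Fin 2) ℝ) (i : Fin N) :
    AmatDiff a F u v (Pmat a F (u i) (v i)) =
      AmatDiff a F u v Q -
        (AmatDiff a F u v Q).submatrix id (Sum.elim (fun _ => Sum.inl i) (fun _ => Sum.inr i)) := by
  ext r (j | j) <;> simp [AmatDiff]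

theorem stmt_10_general (a F : ℝ → ℝ)
    {N : ℕ} (u v : Fin N → ℝ)
    (X : Fin N → Matrix (Fin 3) (Fin 2) ℝ)
    (hX : ∀ i, X i = Pmat a F (u i) (v i))
    (Q : Matrix (Fin 3) (Fin 2) ℝ) :
    (∀ i : Fin N, (AmatDiff a F u v (X i)).rank ≤ (AmatDiff a F u v Q).rank) ∧
      ((AmatDiff a F u v Q).rank = 2 →
        ∀ i : Fin N, (AmatDiff a F u v (X i)).rank ≤ 2) := by
  have hrank : ∀ i : Fin N, (AmatDiff a F u v (X i)).rank ≤ (AmatDiff a F u v Q).rank := by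
    intro i
    rw [hX, AmatDiff_Pmat_eq_sub_submatrix a F u v Q]
    exact rank_sub_submatrix_id_le _ _
  exact ⟨hrank, fun h2 i => h2 ▸ hrank i⟩

/-- For `X_i = P(u_i, v_i) ∈ K_a` and any `Q ∈ ℝ^{3×2}`, one has
`rank(A_X - Π^N(X_i)) ≤ rank(A_X - Π^N(Q))` for every `i`; in particular, if
`rank(A_X - Π^N(Q)) = 2` for some `Q`, then `rank(A_X - Π^N(X_i)) ≤ 2` for all `i`. -/
theorem stmt_10 (a F : ℝ → ℝ)
    (hF : ∀ x : ℝ, HasDerivAt F (a x) x)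
    {N : ℕ} (u v : Fin N → ℝ)
    (X : Fin N → Matrix (Fin 3) (Fin 2) ℝ)
    (hX : ∀ i, X i = Pmat a F (u i) (v i))
    (Q : Matrix (Fin 3) (Fin 2) ℝ) :
    (∀ i : Fin N, (AmatDiff a F u v (X i)).rank ≤ (AmatDiff a F u v Q).rank) ∧
      ((AmatDiff a F u v Q).rank = 2 →
        ∀ i : Fin N, (AmatDiff a F u v (X i)).rank ≤ 2) :=
  stmt_10_general a F u v X hX Q
end

section
/- Suppose a ∈ C²(ℝ) satisfies a' > 0 and a'' > 0 on ℝ, and F satisfies F' = a. Let N ≥ 6 and X = {X_1,…,X_N} ⊂ K_a be a set of N distinct points with X_i = P(u_i, v_i). If X has an order that forms a T_N configuration and rank(A_X − Π^N(X_i)) ≤ 2 for some i ∈ {1,…,N}, then there exist constants λ₁^i, λ₂^i ∈ ℝ such that for all j = 1,…,N: h_j^i·a^i(r_j^i) = λ₁^i·h_j^i + λ₂^i·a^i(r_j^i) and (h_j^i)²/2 + F^i(r_j^i) = λ₁^i·r_j^i + λ₂^i·h_j^i. -/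
open Matrix

noncomputable section

/-! A nonzero left null vector `c` of `A_X - Π^N(X_i)` turns each column into a linear relation
between `h_j`, `a^i(r_j)`, `h_j a^i(r_j)` and `h_j²/2 + F^i(r_j)` (with `r_j, h_j` measured
from `X_i`). If `c₂ ≠ 0`, dividing by it yields `λ₁, λ₂`. If `c₂ = 0`, the relations put the
points `(v_j, u_j)` and `(v_j, a(v_j))` on lines through `(v_i, u_i)` and `(v_i, a(v_i))`; then
the `v_j` are distinct and the strictly convex `a` would agree with an affine function at `N ≥ 3`
points. -/

theorem Matrix.exists_vecMul_eq_zero_of_rank_lt {K m n : Type*} [Field K] [Fintype m]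
    [Fintype n] (M : Matrix m n K) (h : M.rank < Fintype.card m) :
    ∃ c : m → K, c ≠ 0 ∧ c ᵥ* M = 0 := by
  have hker : LinearMap.ker Mᵀ.mulVecLin.rangeRestrict ≠ ⊥ :=
    LinearMap.ker_ne_bot_of_finrank_lt <| by
      rwa [Module.finrank_fintype_fun_eq_card, ← Matrix.rank, Matrix.rank_transpose]
  rw [LinearMap.ker_rangeRestrict] at hker
  obtain ⟨c, hc, hc0⟩ := Submodule.exists_mem_ne_zero_of_ne_bot hker
  exact ⟨c, hc0, by simpa [Matrix.mulVec_transpose] using hc⟩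

theorem StrictConvexOn.card_le_two_of_eq_affine {D : Set ℝ} {f : ℝ → ℝ}
    (hf : StrictConvexOn ℝ D f) {s A : ℝ} {S : Finset ℝ} (hSD : ↑S ⊆ D)
    (hS : ∀ x ∈ S, f x = s * x + A) : S.card ≤ 2 := by
  by_contra! hcard
  obtain ⟨T, hTS, hT⟩ := Finset.exists_subset_card_eq hcard
  set e := T.orderEmbOfFin hT
  have mem : ∀ k, e k ∈ S := fun k => hTS (T.orderEmbOfFin_mem hT k)
  have affine_slope : ∀ {x y : ℝ}, x < y → (s * y + A - (s * x + A)) / (y - x) = s :=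
    fun hxy => by field_simp [sub_ne_zero.mpr hxy.ne']; ring
  have h01 : e 0 < e 1 := e.strictMono (by decide)
  have h12 : e 1 < e 2 := e.strictMono (by decide)
  have hslope := hf.slope_strict_mono_adjacent (hSD (mem 0)) (hSD (mem 2)) h01 h12
  rw [hS _ (mem 0), hS _ (mem 1), hS _ (mem 2), affine_slope h01, affine_slope h12] at hslope
  exact hslope.false

section AmatDiff

variable (a F : ℝ → ℝ) {N : ℕ} (u v : Fin N → ℝ) (p q : ℝ) (c : Fin 3 → ℝ) (j : Fin N)

@[simp]
theorem vecMul_AmatDiff_inl :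
    (c ᵥ* AmatDiff a F u v (Pmat a F p q)) (Sum.inl j) =
      c 0 * (u j - p) + c 1 * (a (v j) - a q) + c 2 * (u j * a (v j) - p * a q) := by
  simp [AmatDiff, Pmat, vecMul, dotProduct, Fin.sum_univ_three]

@[simp]
theorem vecMul_AmatDiff_inr :
    (c ᵥ* AmatDiff a F u v (Pmat a F p q)) (Sum.inr j) =
      c 0 * (v j - q) + c 1 * (u j - p) +
        c 2 * (u j ^ 2 / 2 + F (v j) - (p ^ 2 / 2 + F q)) := by
  simp [AmatDiff, Pmat, vecMul, dotProduct, Fin.sum_univ_three]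

end AmatDiff

theorem exists_slopes_of_linear_relations {ι : Type*} (a : ℝ → ℝ) (u v : ι → ℝ)
    (u₀ v₀ c₀ c₁ : ℝ) (hc : c₀ ≠ 0 ∨ c₁ ≠ 0)
    (h₁ : ∀ j, c₀ * (u j - u₀) + c₁ * (a (v j) - a v₀) = 0)
    (h₂ : ∀ j, c₀ * (v j - v₀) + c₁ * (u j - u₀) = 0) :
    ∃ s t : ℝ, ∀ j, u j - u₀ = t * (v j - v₀) ∧ a (v j) - a v₀ = s * (v j - v₀) := by
  by_cases hc₁ : c₁ = 0
  · have hc₀ : c₀ ≠ 0 := hc.resolve_right (not_not.mpr hc₁)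
    refine ⟨0, 0, fun j => ?_⟩
    have hv : v j = v₀ := by simpa [hc₁, hc₀, sub_eq_zero] using h₂ j
    have hu : u j = u₀ := by simpa [hc₁, hc₀, sub_eq_zero] using h₁ j
    simp [hu, hv]
  · have hu : ∀ j, u j - u₀ = -(c₀ / c₁) * (v j - v₀) := fun j => by
      field_simp; linear_combination h₂ j
    refine ⟨(c₀ / c₁) ^ 2, -(c₀ / c₁), fun j => ⟨hu j, ?_⟩⟩
    have ha : a (v j) - a v₀ = -(c₀ / c₁) * (u j - u₀) := by
      field_simp; linear_combination h₁ j
    rw [ha, hu j]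
    ring

theorem card_le_two_of_collinear {ι : Type*} [Fintype ι] {a : ℝ → ℝ}
    (ha : StrictConvexOn ℝ Set.univ a) {u v : ι → ℝ} (huv : Function.Injective fun j => (u j, v j))
    {u₀ v₀ s t : ℝ}
    (hst : ∀ j, u j - u₀ = t * (v j - v₀) ∧ a (v j) - a v₀ = s * (v j - v₀)) :
    Fintype.card ι ≤ 2 := by
  have hv : Function.Injective v := fun j k hjk => huv <| by
    have hu : u j = u k := by linear_combination (hst j).1 - (hst k).1 + t * hjk
    simp [hu, hjk]
  have hcard := ha.card_le_two_of_eq_affine (S := Finset.univ.image v) (s := s)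
    (A := a v₀ - s * v₀) (Set.subset_univ _) <| by
      simp only [Finset.mem_image, Finset.mem_univ, true_and, forall_exists_index,
        forall_apply_eq_imp_iff]
      intro j
      linear_combination (hst j).2
  rwa [Finset.card_image_of_injective _ hv, Finset.card_univ] at hcard

theorem stmt_11_general (a F : ℝ → ℝ)
    (ha : ContDiff ℝ 2 a)
    (ha'' : ∀ x : ℝ, 0 < deriv (deriv a) x)
    (N : ℕ) (hN : 6 ≤ N)
    (u v : Fin N → ℝ)
    (X : Fin N → Matrix (Fin 3) (Fin 2) ℝ)
    (hX : ∀ i, X i = Pmat a F (u i) (v i))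
    (hdist : Function.Injective X)
    (i : Fin N)
    (hrank : (AmatDiff a F u v (X i)).rank ≤ 2) :
    ∃ l1 l2 : ℝ, ∀ j : Fin N,
      (u j - u i) * (a (v j) - a (v i)) =
        l1 * (u j - u i) + l2 * (a (v j) - a (v i)) ∧
      (u j - u i) ^ 2 / 2 + (F (v j) - F (v i) - a (v i) * (v j - v i)) =
        l1 * (v j - v i) + l2 * (u j - u i) := by
  rw [hX i] at hrank
  obtain ⟨c, hc0, hc⟩ := (AmatDiff a F u v (Pmat a F (u i) (v i))).exists_vecMul_eq_zero_of_rank_lt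
    (by rw [Fintype.card_fin]; omega)
  have E₁ j := congrFun hc (Sum.inl j)
  have E₂ j := congrFun hc (Sum.inr j)
  simp only [vecMul_AmatDiff_inl, vecMul_AmatDiff_inr, Pi.zero_apply] at E₁ E₂
  by_cases hc2 : c 2 = 0
  · have hc01 : c 0 ≠ 0 ∨ c 1 ≠ 0 := by
      contrapose! hc0; ext k; fin_cases k <;> simp [hc0, hc2]
    obtain ⟨s, t, hst⟩ := exists_slopes_of_linear_relations a u v (u i) (v i) (c 0) (c 1) hc01
      (fun j => by simpa [hc2] using E₁ j) (fun j => by simpa [hc2] using E₂ j)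
    have huv : Function.Injective fun j => (u j, v j) := fun j k hjk => hdist <| by
      simp only [Prod.mk.injEq] at hjk
      rw [hX, hX, hjk.1, hjk.2]
    have hconv : StrictConvexOn ℝ Set.univ a :=
      strictConvexOn_univ_of_deriv2_pos ha.continuous (by simpa using ha'')
    have := card_le_two_of_collinear hconv huv hst
    rw [Fintype.card_fin] at this
    omega
  · refine ⟨-(c 0 / c 2) - a (v i), -(c 1 / c 2) - u i, fun j => ⟨?_, ?_⟩⟩
    · field_simp
      linear_combination E₁ j
    · field_simp
      linear_combination 2 * E₂ j

/-- If `a ∈ C²` with `a' > 0`, `a'' > 0`, `F' = a`, `N ≥ 6`, the `N` distinct points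
`X_i = P(u_i, v_i) ∈ K_a` have an order forming a `T_N` configuration, and
`rank(A_X - Π^N(X_i)) ≤ 2` for some `i`, then there are constants `λ₁^i, λ₂^i` with
`h_j^i a^i(r_j^i) = λ₁^i h_j^i + λ₂^i a^i(r_j^i)` and
`(h_j^i)²/2 + F^i(r_j^i) = λ₁^i r_j^i + λ₂^i h_j^i` for all `j`. -/
theorem stmt_11 (a F : ℝ → ℝ)
    (ha : ContDiff ℝ 2 a)
    (ha' : ∀ x : ℝ, 0 < deriv a x)
    (ha'' : ∀ x : ℝ, 0 < deriv (deriv a) x)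
    (hF : ∀ x : ℝ, HasDerivAt F (a x) x)
    (N : ℕ) (hN : 6 ≤ N)
    (u v : Fin N → ℝ)
    (X : Fin N → Matrix (Fin 3) (Fin 2) ℝ)
    (hX : ∀ i, X i = Pmat a F (u i) (v i))
    (hdist : Function.Injective X)
    (hTN : HasTNOrder X)
    (i : Fin N)
    (hrank : (AmatDiff a F u v (X i)).rank ≤ 2) :
    ∃ l1 l2 : ℝ, ∀ j : Fin N,
      (u j - u i) * (a (v j) - a (v i)) =
        l1 * (u j - u i) + l2 * (a (v j) - a (v i)) ∧
      (u j - u i) ^ 2 / 2 + (F (v j) - F (v i) - a (v i) * (v j - v i)) =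
        l1 * (v j - v i) + l2 * (u j - u i) :=
  stmt_11_general a F ha ha'' N hN u v X hX hdist i hrank
end
end

section
/- Suppose a ∈ C²(ℝ) satisfies a' > 0 and a'' > 0 on ℝ, and F satisfies F' = a. Let N ≥ 6 and X = {X_1,…,X_N} ⊂ K_a be a set of N distinct points with X_i = P(u_i, v_i). Assume in addition that dim Span{X_1 − X_i, …, X_N − X_i} = 2 for every i = 1,…,N. If X has an order that forms a T_N configuration, then for each i = 1,…,N there exist constants α₁^i, α₂^i, λ₁^i, λ₂^i ∈ ℝ such that either, for all j = 1,…,N: a^i(r_j^i) = α₁^i·h_j^i + α₂^i·r_j^i, h_j^i·a^i(r_j^i) = λ₁^i·h_j^i + λ₂^i·a^i(r_j^i), and (h_j^i)²/2 + F^i(r_j^i) = λ₁^i·r_j^i + λ₂^i·h_j^i; or, for all j = 1,…,N: r_j^i = α₁^i·h_j^i + α₂^i·a^i(r_j^i), h_j^i·a^i(r_j^i) = λ₁^i·h_j^i + λ₂^i·a^i(r_j^i), and (h_j^i)²/2 + F^i(r_j^i) = λ₁^i·r_j^i + λ₂^i·h_j^i. -/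
open Matrix

noncomputable section

-- rank-one factorization
lemma rank_one_fact (M : Matrix (Fin 3) (Fin 2) ℝ) (h : M.rank = 1) :
    ∃ (ρ : Fin 3 → ℝ) (d : Fin 2 → ℝ), M = Matrix.of fun k l => ρ k * d l := by
  have h1 : Module.finrank ℝ (LinearMap.range M.mulVecLin) = 1 := h
  rw [finrank_eq_one_iff'] at h1
  obtain ⟨⟨c, hc⟩, hc0, hall⟩ := h1
  refine ⟨c, fun l => Classical.choose (hall ⟨M.mulVec (Pi.single l 1), ⟨_, rfl⟩⟩), ?_⟩
  ext k l
  have hspec := Classical.choose_spec (hall ⟨M.mulVec (Pi.single l 1), ⟨_, rfl⟩⟩)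
  have := congr_arg (fun (w : LinearMap.range M.mulVecLin) => (w : Fin 3 → ℝ) k) hspec
  simp at this
  rw [Matrix.of_apply, mul_comm, ← this]
  simp [Matrix.mulVec_single]

lemma rank_smul_eq {s : ℝ} (hs : s ≠ 0) (M : Matrix (Fin 3) (Fin 2) ℝ) :
    (s • M).rank = M.rank := by
  have h1 : (s • M).mulVecLin = s • M.mulVecLin := by
    ext x
    simp [Matrix.mulVecLin_apply, Matrix.smul_mulVec]
  have h2 : LinearMap.range (s • M).mulVecLin = LinearMap.range M.mulVecLin := by
    rw [h1, LinearMap.range_smul _ s hs]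
  unfold Matrix.rank
  rw [h2]

/-- The `T_N` structural step: all `C_k` lie in `V` and two of them are independent. -/
lemma TN_step {N : ℕ} (hN : 6 ≤ N) (X : Fin N → Matrix (Fin 3) (Fin 2) ℝ)
    (V : Submodule ℝ (Matrix (Fin 3) (Fin 2) ℝ))
    (hVdiff : ∀ j k : Fin N, X j - X k ∈ V)
    (hTN : HasTNOrder X) :
    ∃ R1 R2 : Matrix (Fin 3) (Fin 2) ℝ, R1 ∈ V ∧ R2 ∈ V ∧ R1.rank = 1 ∧ R2.rank = 1 ∧
      LinearIndependent ℝ ![R1, R2] := by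
  obtain ⟨π, _, hinj, hno1, B, C, κ, hκ, hC1, hsum, hrep⟩ := hTN
  set Z := X ∘ π with hZ
  have hZdiff : ∀ j k : Fin N, Z j - Z k ∈ V := fun j k => hVdiff _ _
  have hflt : ∀ (k : ℕ) (hk : k + 1 < N),
      Finset.univ.filter (fun j => j < (⟨k+1, hk⟩ : Fin N)) =
      insert (⟨k, by omega⟩ : Fin N)
        (Finset.univ.filter (fun j => j < (⟨k, by omega⟩ : Fin N))) := by
    intro k hk
    ext j
    simp only [Finset.mem_filter, Finset.mem_insert, Finset.mem_univ, true_and, Fin.lt_def,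
      Fin.ext_iff]
    omega
  have hcons : ∀ (k : ℕ) (hk : k + 1 < N),
      Z ⟨k+1, hk⟩ - Z ⟨k, by omega⟩ =
        (1 - κ ⟨k, by omega⟩) • C ⟨k, by omega⟩ + κ ⟨k+1, hk⟩ • C ⟨k+1, hk⟩ := by
    intro k hk
    rw [hrep ⟨k+1, hk⟩, hrep ⟨k, by omega⟩, hflt k hk,
      Finset.sum_insert (by simp [Fin.lt_def])]
    module
  have hq : ∀ (k : ℕ) (hk : k + 1 < N),
      V.mkQ (C ⟨k+1, hk⟩) =
        ((κ ⟨k, by omega⟩ - 1) / κ ⟨k+1, hk⟩) • V.mkQ (C ⟨k, by omega⟩) := by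
    intro k hk
    have hκ' : κ ⟨k+1, hk⟩ ≠ 0 := by have := hκ ⟨k+1, hk⟩; linarith
    have h0 : V.mkQ (Z ⟨k+1, hk⟩ - Z ⟨k, by omega⟩) = 0 := by
      rw [Submodule.mkQ_apply]
      exact (Submodule.Quotient.mk_eq_zero V).mpr (hZdiff _ _)
    have h1 : (1 - κ ⟨k, by omega⟩) • V.mkQ (C ⟨k, by omega⟩)
        + κ ⟨k+1, hk⟩ • V.mkQ (C ⟨k+1, hk⟩) = 0 := by
      rw [← _root_.map_smul, ← _root_.map_smul, ← map_add, ← hcons k hk]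
      exact h0
    have h2 : κ ⟨k+1, hk⟩ • V.mkQ (C ⟨k+1, hk⟩)
        = (κ ⟨k, by omega⟩ - 1) • V.mkQ (C ⟨k, by omega⟩) := by
      linear_combination (norm := module) h1
    rw [div_eq_inv_mul, mul_smul, ← h2, inv_smul_smul₀ hκ']
  have hscale : ∀ (k : ℕ) (hk : k < N), ∃ t : ℝ, 0 < t ∧
      V.mkQ (C ⟨k, hk⟩) = t • V.mkQ (C ⟨0, by omega⟩) := by
    intro k
    induction k with
    | zero => intro hk; exact ⟨1, one_pos, (one_smul ℝ _).symm⟩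
    | succ n ih =>
      intro hk
      obtain ⟨t, ht, hts⟩ := ih (by omega)
      refine ⟨(κ ⟨n, by omega⟩ - 1) / κ ⟨n+1, hk⟩ * t, ?_, ?_⟩
      · have h1 := hκ (⟨n, by omega⟩ : Fin N)
        have h2 := hκ (⟨n+1, hk⟩ : Fin N)
        apply mul_pos (div_pos (by linarith) (by linarith)) ht
      · rw [hq n hk, hts, mul_smul]
  have hall : ∀ j : Fin N, ∃ t : ℝ, 0 < t ∧
      V.mkQ (C j) = t • V.mkQ (C ⟨0, by omega⟩) := fun j => hscale j.1 j.2
  choose t htpos hts using hall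
  have hsum0 : (∑ j, t j) • V.mkQ (C ⟨0, by omega⟩) = 0 := by
    rw [Finset.sum_smul]
    have heq : ∑ j, t j • V.mkQ (C ⟨0, by omega⟩) = ∑ j, V.mkQ (C j) :=
      Finset.sum_congr rfl (fun j _ => (hts j).symm)
    rw [heq, ← map_sum, hsum, map_zero]
  have hpos : 0 < ∑ j, t j :=
    Finset.sum_pos (fun j _ => htpos j) ⟨⟨0, by omega⟩, Finset.mem_univ _⟩
  have hC00 : V.mkQ (C ⟨0, by omega⟩) = 0 := by
    rcases smul_eq_zero.mp hsum0 with h | h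
    · exact absurd h (ne_of_gt hpos)
    · exact h
  have CinV : ∀ j, C j ∈ V := by
    intro j
    have h3 := hts j
    rw [hC00, smul_zero] at h3
    rw [Submodule.mkQ_apply] at h3
    exact (Submodule.Quotient.mk_eq_zero V).mp h3
  have hC0ne : C ⟨0, by omega⟩ ≠ 0 := by
    intro h
    have h4 := hC1 ⟨0, by omega⟩
    rw [h, Matrix.rank_zero] at h4
    exact absurd h4 (by norm_num)
  by_cases hallpar : ∀ k, ∃ s : ℝ, C k = s • C ⟨0, by omega⟩
  · exfalso
    obtain ⟨s, hs⟩ := hallpar ⟨1, by omega⟩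
    have h1 := hcons 0 (by omega)
    rw [hs] at h1
    have h2 : Z ⟨1, by omega⟩ - Z ⟨0, by omega⟩ =
        ((1 - κ ⟨0, by omega⟩) + κ ⟨1, by omega⟩ * s) • C ⟨0, by omega⟩ := by
      rw [h1]; module
    have hZne : Z ⟨1, by omega⟩ ≠ Z ⟨0, by omega⟩ := by
      intro h
      have := hinj h
      simp [Fin.ext_iff] at this
    have hsne : (1 - κ ⟨0, by omega⟩) + κ ⟨1, by omega⟩ * s ≠ 0 := by
      intro h
      rw [h, zero_smul] at h2
      exact hZne (sub_eq_zero.mp h2)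
    have h5 := hno1 ⟨1, by omega⟩ ⟨0, by omega⟩ (by simp [Fin.ext_iff])
    apply h5
    show (Z ⟨1, by omega⟩ - Z ⟨0, by omega⟩).rank = 1
    rw [h2, rank_smul_eq hsne]
    exact hC1 _
  · push_neg at hallpar
    obtain ⟨k0, hk0⟩ := hallpar
    refine ⟨C k0, C ⟨0, by omega⟩, CinV _, CinV _, hC1 _, hC1 _, ?_⟩
    rw [linearIndependent_fin2]
    refine ⟨hC0ne, fun s hsc => hk0 s hsc.symm⟩

lemma conv3' (g : ℝ → ℝ) (hg : StrictConvexOn ℝ Set.univ g) (m c x y z : ℝ)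
    (hxy : x < y) (hyz : y < z)
    (h1 : g x = m * x + c) (h2 : g y = m * y + c) (h3 : g z = m * z + c) : False := by
  have hxz : x < z := hxy.trans hyz
  have hzx : z - x ≠ 0 := by linarith
  set s : ℝ := (z - y) / (z - x) with hs
  set t : ℝ := (y - x) / (z - x) with ht
  have hs0 : 0 < s := by apply div_pos <;> linarith
  have ht0 : 0 < t := by apply div_pos <;> linarith
  have hst : s + t = 1 := by
    rw [hs, ht, ← add_div]
    rw [show z - y + (y - x) = z - x by ring, div_self hzx]
  have hcomb : s • x + t • z = y := by
    simp only [smul_eq_mul, hs, ht]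
    field_simp
    ring
  have key := hg.2 (Set.mem_univ x) (Set.mem_univ z) (ne_of_lt hxz) hs0 ht0 hst
  rw [hcomb, h1, h2, h3] at key
  simp only [smul_eq_mul] at key hcomb
  have : s * (m * x + c) + t * (m * z + c) = m * y + c := by
    linear_combination m * hcomb + c * hst
  linarith

lemma conv3 (g : ℝ → ℝ) (hg : StrictConvexOn ℝ Set.univ g) (m c x y z : ℝ)
    (hxy : x ≠ y) (hxz : x ≠ z) (hyz : y ≠ z)
    (h1 : g x = m * x + c) (h2 : g y = m * y + c) (h3 : g z = m * z + c) : False := by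
  rcases lt_trichotomy x y with h | h | h
  · rcases lt_trichotomy y z with h' | h' | h'
    · exact conv3' g hg m c x y z h h' h1 h2 h3
    · exact hyz h'
    · rcases lt_trichotomy x z with h'' | h'' | h''
      · exact conv3' g hg m c x z y h'' h' h1 h3 h2
      · exact hxz h''
      · exact conv3' g hg m c z x y h'' h h3 h1 h2
  · exact hxy h
  · rcases lt_trichotomy x z with h' | h' | h'
    · exact conv3' g hg m c y x z h h' h2 h1 h3
    · exact hxz h'
    · rcases lt_trichotomy y z with h'' | h'' | h''
      · exact conv3' g hg m c y z x h'' h' h2 h3 h1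
      · exact hyz h''
      · exact conv3' g hg m c z y x h'' h h3 h2 h1

lemma exists_ne_index {N : ℕ} (hN : 6 ≤ N) (i : Fin N) : ∃ j : Fin N, j ≠ i := by
  by_cases h : i = (⟨0, by omega⟩ : Fin N)
  · exact ⟨⟨1, by omega⟩, by rw [h]; simp [Fin.ext_iff]⟩
  · exact ⟨⟨0, by omega⟩, fun hc => h hc.symm⟩

lemma eq_contra {N : ℕ} (hN : 6 ≤ N) (u v : Fin N → ℝ) (i : Fin N)
    (hUV : ∀ j k : Fin N, u j = u k → v j = v k → j = k)
    (h0 : ∀ j, u j = u i) (h1 : ∀ j, v j = v i) : False := by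
  obtain ⟨j, hj⟩ := exists_ne_index hN i
  exact hj (hUV j i (h0 j) (h1 j))

lemma conv_affine_contra (g : ℝ → ℝ) (hg : StrictConvexOn ℝ Set.univ g)
    {N : ℕ} (hN : 6 ≤ N) (w : Fin N → ℝ) (hw : Function.Injective w) (m c : ℝ)
    (h : ∀ j, g (w j) = m * w j + c) : False := by
  have h01 : (⟨0, by omega⟩ : Fin N) ≠ ⟨1, by omega⟩ := by simp [Fin.ext_iff]
  have h02 : (⟨0, by omega⟩ : Fin N) ≠ ⟨2, by omega⟩ := by simp [Fin.ext_iff]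
  have h12 : (⟨1, by omega⟩ : Fin N) ≠ ⟨2, by omega⟩ := by simp [Fin.ext_iff]
  exact conv3 g hg m c _ _ _
    (fun hc => h01 (hw hc)) (fun hc => h02 (hw hc)) (fun hc => h12 (hw hc))
    (h ⟨0, by omega⟩) (h ⟨1, by omega⟩) (h ⟨2, by omega⟩)

lemma convA_contra (a : ℝ → ℝ) (haconv : StrictConvexOn ℝ Set.univ a)
    {N : ℕ} (hN : 6 ≤ N) (u v : Fin N → ℝ) (i : Fin N)
    (hUV : ∀ j k : Fin N, u j = u k → v j = v k → j = k)
    (cH κc : ℝ)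
    (hH : ∀ j, u j - u i = cH * (v j - v i))
    (hA : ∀ j, a (v j) - a (v i) = κc * (v j - v i)) : False := by
  have hvinj : Function.Injective v := by
    intro j k h
    refine hUV j k ?_ h
    have h1 := hH j
    have h2 := hH k
    rw [h] at h1
    linarith
  exact conv_affine_contra a haconv hN v hvinj κc (a (v i) - κc * v i)
    (fun j => by linear_combination (hA j))

lemma convF_contra (a F : ℝ → ℝ) (hFconv : StrictConvexOn ℝ Set.univ F)
    {N : ℕ} (hN : 6 ≤ N) (u v : Fin N → ℝ) (i : Fin N)
    (hUV : ∀ j k : Fin N, u j = u k → v j = v k → j = k)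
    (cH κc : ℝ)
    (hH : ∀ j, u j - u i = cH * (v j - v i))
    (hG : ∀ j, F (v j) - F (v i) - a (v i) * (v j - v i) = κc * (v j - v i)) : False := by
  have hvinj : Function.Injective v := by
    intro j k h
    refine hUV j k ?_ h
    have h1 := hH j
    have h2 := hH k
    rw [h] at h1
    linarith
  exact conv_affine_contra F hFconv hN v hvinj (κc + a (v i))
    (F (v i) - (κc + a (v i)) * v i) (fun j => by linear_combination (hG j))

lemma mk_lin2 {N : ℕ} (f g : Fin N → ℝ) (α β : Fin N → ℝ) (X1 X2 Y1 Y2 c : ℝ)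
    (h1 : ∀ j, f j = α j * X1 + β j * X2) (h2 : ∀ j, g j = α j * Y1 + β j * Y2)
    (c1 : X1 = c * Y1) (c2 : X2 = c * Y2) : ∀ j, f j = c * g j := fun j => by
  rw [h1 j, h2 j, c1, c2]; ring


section FinishLemmas

variable (a F : ℝ → ℝ) {N : ℕ} (u v : Fin N → ℝ) (i : Fin N)
  (ρ σ : Fin 3 → ℝ) (d e : Fin 2 → ℝ) (α β : Fin N → ℝ)

lemma finish_lam
    (E1 : ∀ j, u j - u i = α j * (ρ 0 * d 0) + β j * (σ 0 * e 0))
    (E2 : ∀ j, v j - v i = α j * (ρ 0 * d 1) + β j * (σ 0 * e 1))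
    (E3 : ∀ j, a (v j) - a (v i) = α j * (ρ 1 * d 0) + β j * (σ 1 * e 0))
    (E4 : ∀ j, u j - u i = α j * (ρ 1 * d 1) + β j * (σ 1 * e 1))
    (E5 : ∀ j, u j * a (v j) - u i * a (v i) = α j * (ρ 2 * d 0) + β j * (σ 2 * e 0))
    (E6 : ∀ j, u j ^ 2 / 2 + F (v j) - (u i ^ 2 / 2 + F (v i))
      = α j * (ρ 2 * d 1) + β j * (σ 2 * e 1))
    (l1 l2 : ℝ)
    (lc1 : l1 * ρ 0 + l2 * ρ 1 = ρ 2 - u i * ρ 1 - a (v i) * ρ 0)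
    (lc2 : l1 * σ 0 + l2 * σ 1 = σ 2 - u i * σ 1 - a (v i) * σ 0) :
    ∀ j, (u j - u i) * (a (v j) - a (v i)) =
        l1 * (u j - u i) + l2 * (a (v j) - a (v i)) ∧
      (u j - u i) ^ 2 / 2 + (F (v j) - F (v i) - a (v i) * (v j - v i)) =
        l1 * (v j - v i) + l2 * (u j - u i) := by
  intro j
  constructor
  · linear_combination (E5 j) - u i * (E3 j) - a (v i) * (E1 j) - l1 * (E1 j) - l2 * (E3 j)
      - (α j * d 0) * lc1 - (β j * e 0) * lc2
  · linear_combination (E6 j) - u i * (E4 j) - a (v i) * (E2 j) - l1 * (E2 j) - l2 * (E4 j)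
      - (α j * d 1) * lc1 - (β j * e 1) * lc2

lemma finish1
    (E1 : ∀ j, u j - u i = α j * (ρ 0 * d 0) + β j * (σ 0 * e 0))
    (E2 : ∀ j, v j - v i = α j * (ρ 0 * d 1) + β j * (σ 0 * e 1))
    (E3 : ∀ j, a (v j) - a (v i) = α j * (ρ 1 * d 0) + β j * (σ 1 * e 0))
    (a1 a2 : ℝ)
    (x1 : a1 * (ρ 0 * d 0) + a2 * (ρ 0 * d 1) = ρ 1 * d 0)
    (x2 : a1 * (σ 0 * e 0) + a2 * (σ 0 * e 1) = σ 1 * e 0) :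
    ∀ j, a (v j) - a (v i) = a1 * (u j - u i) + a2 * (v j - v i) := by
  intro j
  linear_combination (E3 j) - a1 * (E1 j) - a2 * (E2 j) - (α j) * x1 - (β j) * x2

lemma finish2
    (E1 : ∀ j, u j - u i = α j * (ρ 0 * d 0) + β j * (σ 0 * e 0))
    (E2 : ∀ j, v j - v i = α j * (ρ 0 * d 1) + β j * (σ 0 * e 1))
    (E3 : ∀ j, a (v j) - a (v i) = α j * (ρ 1 * d 0) + β j * (σ 1 * e 0))
    (a1 a2 : ℝ)
    (x1 : a1 * (ρ 0 * d 0) + a2 * (ρ 1 * d 0) = ρ 0 * d 1)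
    (x2 : a1 * (σ 0 * e 0) + a2 * (σ 1 * e 0) = σ 0 * e 1) :
    ∀ j, v j - v i = a1 * (u j - u i) + a2 * (a (v j) - a (v i)) := by
  intro j
  linear_combination (E2 j) - a1 * (E1 j) - a2 * (E3 j) - (α j) * x1 - (β j) * x2

lemma hdstar_lemma
    (E2 : ∀ j, v j - v i = α j * (ρ 0 * d 1) + β j * (σ 0 * e 1))
    (E4 : ∀ j, u j - u i = α j * (ρ 1 * d 1) + β j * (σ 1 * e 1))
    (E6 : ∀ j, u j ^ 2 / 2 + F (v j) - (u i ^ 2 / 2 + F (v i))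
      = α j * (ρ 2 * d 1) + β j * (σ 2 * e 1)) :
    ∀ j, (u j - u i) ^ 2 / 2 + (F (v j) - F (v i) - a (v i) * (v j - v i)) =
      α j * (d 1 * (ρ 2 - u i * ρ 1 - a (v i) * ρ 0))
        + β j * (e 1 * (σ 2 - u i * σ 1 - a (v i) * σ 0)) := by
  intro j
  linear_combination (E6 j) - u i * (E4 j) - a (v i) * (E2 j)

end FinishLemmas


section Core

variable (a F : ℝ → ℝ)

/-- Case `d 0 = 0` of the core analysis. -/
lemma coreP1
    (hainj : Function.Injective a)
    (haconv : StrictConvexOn ℝ Set.univ a)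
    (hFconv : StrictConvexOn ℝ Set.univ F)
    {N : ℕ} (hN : 6 ≤ N) (u v : Fin N → ℝ) (i : Fin N)
    (hUV : ∀ j k : Fin N, u j = u k → v j = v k → j = k)
    (ρ σ : Fin 3 → ℝ) (d e : Fin 2 → ℝ) (α β : Fin N → ℝ)
    (E1 : ∀ j, u j - u i = α j * (ρ 0 * d 0) + β j * (σ 0 * e 0))
    (E2 : ∀ j, v j - v i = α j * (ρ 0 * d 1) + β j * (σ 0 * e 1))
    (E3 : ∀ j, a (v j) - a (v i) = α j * (ρ 1 * d 0) + β j * (σ 1 * e 0))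
    (E4 : ∀ j, u j - u i = α j * (ρ 1 * d 1) + β j * (σ 1 * e 1))
    (E5 : ∀ j, u j * a (v j) - u i * a (v i) = α j * (ρ 2 * d 0) + β j * (σ 2 * e 0))
    (E6 : ∀ j, u j ^ 2 / 2 + F (v j) - (u i ^ 2 / 2 + F (v i))
      = α j * (ρ 2 * d 1) + β j * (σ 2 * e 1))
    (t1 : ρ 1 * d 1 = ρ 0 * d 0) (t2 : σ 1 * e 1 = σ 0 * e 0)
    (hd : ¬(d 0 = 0 ∧ d 1 = 0)) (he : ¬(e 0 = 0 ∧ e 1 = 0))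
    (hd0 : d 0 = 0) :
    ∃ a1 a2 l1 l2 : ℝ,
      (∀ j : Fin N,
        a (v j) - a (v i) = a1 * (u j - u i) + a2 * (v j - v i) ∧
        (u j - u i) * (a (v j) - a (v i)) =
          l1 * (u j - u i) + l2 * (a (v j) - a (v i)) ∧
        (u j - u i) ^ 2 / 2 + (F (v j) - F (v i) - a (v i) * (v j - v i)) =
          l1 * (v j - v i) + l2 * (u j - u i)) ∨
      (∀ j : Fin N,
        v j - v i = a1 * (u j - u i) + a2 * (a (v j) - a (v i)) ∧
        (u j - u i) * (a (v j) - a (v i)) =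
          l1 * (u j - u i) + l2 * (a (v j) - a (v i)) ∧
        (u j - u i) ^ 2 / 2 + (F (v j) - F (v i) - a (v i) * (v j - v i)) =
          l1 * (v j - v i) + l2 * (u j - u i)) := by
  have hd1 : d 1 ≠ 0 := fun h => hd ⟨hd0, h⟩
  have hρ1 : ρ 1 = 0 := by
    have h : ρ 1 * d 1 = 0 := by rw [t1, hd0]; ring
    exact (mul_eq_zero.mp h).resolve_right hd1
  by_cases he0 : e 0 = 0
  · -- h ≡ 0 and A ≡ 0: all the points coincide
    exfalso
    have hH0 : ∀ j, u j = u i := fun j => by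
      have h := E1 j; rw [hd0, he0] at h; simp at h; linarith
    have hA0 : ∀ j, v j = v i := fun j => by
      apply hainj
      have h := E3 j; rw [hρ1, he0] at h; simp at h; linarith
    exact eq_contra hN u v i hUV hH0 hA0
  · by_cases hσ0 : σ 0 = 0
    · by_cases hσ1 : σ 1 = 0
      · -- A ≡ 0 hence r ≡ 0; also h ≡ 0
        exfalso
        have hA0 : ∀ j, v j = v i := fun j => by
          apply hainj
          have h := E3 j; rw [hd0, hσ1] at h; simp at h; linarith
        have hH0 : ∀ j, u j = u i := fun j => by
          have h := E1 j; rw [hd0, hσ0] at h; simp at h; linarith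
        exact eq_contra hN u v i hUV hH0 hA0
      · -- σ 1 ≠ 0 forces e 1 = 0
        exfalso
        have he1 : e 1 = 0 := by
          have h : σ 1 * e 1 = 0 := by rw [t2, hσ0]; ring
          exact (mul_eq_zero.mp h).resolve_left hσ1
        have hH0 : ∀ j, u j - u i = 0 := fun j => by
          have h := E1 j; rw [hd0, hσ0] at h; simp at h; linarith
        by_cases hρ0 : ρ 0 = 0
        · -- r ≡ 0 as well
          have hr0 : ∀ j, v j = v i := fun j => by
            have h := E2 j; rw [hρ0, hσ0] at h; simp at h; linarith
          exact eq_contra hN u v i hUV (fun j => by have := hH0 j; linarith) hr0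
        · -- convexity contradiction with F
          have hdstar := hdstar_lemma a F u v i ρ σ d e α β E2 E4 E6
          have hG : ∀ j, F (v j) - F (v i) - a (v i) * (v j - v i)
              = ((ρ 2 - u i * ρ 1 - a (v i) * ρ 0) / ρ 0) * (v j - v i) := by
            intro j
            have h3 : F (v j) - F (v i) - a (v i) * (v j - v i)
                = α j * (d 1 * (ρ 2 - u i * ρ 1 - a (v i) * ρ 0)) := by
              linear_combination (hdstar j) - ((u j - u i)/2) * (hH0 j)
                + (β j * (σ 2 - u i * σ 1 - a (v i) * σ 0)) * he1
            have h4 : v j - v i = α j * (ρ 0 * d 1) := by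
              linear_combination (E2 j) + (β j * e 1) * hσ0
            rw [h3, h4]
            field_simp <;> ring
          exact convF_contra a F hFconv hN u v i hUV 0
            ((ρ 2 - u i * ρ 1 - a (v i) * ρ 0) / ρ 0)
            (fun j => by rw [hH0 j]; ring) hG
    · -- σ 0 ≠ 0
      by_cases hρ0 : ρ 0 = 0
      · -- T1.2.2a
        exfalso
        by_cases he1 : e 1 = 0
        · have h : σ 0 * e 0 = 0 := by rw [← t2, he1]; ring
          rcases mul_eq_zero.mp h with h' | h'
          · exact hσ0 h'
          · exact he0 h'
        · -- a-case contradiction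
          have hH : ∀ j, u j - u i = (e 0 / e 1) * (v j - v i) := by
            apply mk_lin2 (fun j => u j - u i) (fun j => v j - v i) α β
              (ρ 0 * d 0) (σ 0 * e 0) (ρ 0 * d 1) (σ 0 * e 1) (e 0 / e 1) E1 E2
            · rw [hρ0]; ring
            · field_simp <;> ring
          have hA : ∀ j, a (v j) - a (v i) = (σ 1 * e 0 / (σ 0 * e 1)) * (v j - v i) := by
            apply mk_lin2 (fun j => a (v j) - a (v i)) (fun j => v j - v i) α β
              (ρ 1 * d 0) (σ 1 * e 0) (ρ 0 * d 1) (σ 0 * e 1) (σ 1 * e 0 / (σ 0 * e 1)) E3 E2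
            · rw [hρ0, hd0]; ring
            · field_simp <;> ring
          exact convA_contra a haconv hN u v i hUV _ _ hH hA
      · -- ρ 0 ≠ 0: alternative 1 holds
        by_cases hσ1 : σ 1 = 0
        · exfalso
          have h : σ 0 * e 0 = 0 := by rw [← t2, hσ1]; ring
          rcases mul_eq_zero.mp h with h' | h'
          · exact hσ0 h'
          · exact he0 h'
        · set Pc := ρ 2 - u i * ρ 1 - a (v i) * ρ 0 with hPc
          set Qc := σ 2 - u i * σ 1 - a (v i) * σ 0 with hQc
          refine ⟨σ 1 / σ 0, 0, Pc / ρ 0, (Qc - (Pc / ρ 0) * σ 0) / σ 1, Or.inl ?_⟩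
          have lc1 : (Pc / ρ 0) * ρ 0 + ((Qc - (Pc / ρ 0) * σ 0) / σ 1) * ρ 1 = Pc := by
            rw [hρ1]; field_simp; ring
          have lc2 : (Pc / ρ 0) * σ 0 + ((Qc - (Pc / ρ 0) * σ 0) / σ 1) * σ 1 = Qc := by
            field_simp
            ring
          have x1 : (σ 1 / σ 0) * (ρ 0 * d 0) + 0 * (ρ 0 * d 1) = ρ 1 * d 0 := by
            rw [hd0, hρ1]; ring
          have x2 : (σ 1 / σ 0) * (σ 0 * e 0) + 0 * (σ 0 * e 1) = σ 1 * e 0 := by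
            field_simp
            ring
          have hlam := finish_lam a F u v i ρ σ d e α β E1 E2 E3 E4 E5 E6 _ _ lc1 lc2
          have halt := finish1 a u v i ρ σ d e α β E1 E2 E3 _ _ x1 x2
          exact fun j => ⟨halt j, (hlam j).1, (hlam j).2⟩


/-- Case `d 0 ≠ 0`, `e 0 ≠ 0`, `D = 0`, `ρ 0 = 0` leads to a contradiction. -/
lemma core3rho
    (hainj : Function.Injective a)
    (haconv : StrictConvexOn ℝ Set.univ a)
    {N : ℕ} (hN : 6 ≤ N) (u v : Fin N → ℝ) (i : Fin N)
    (hUV : ∀ j k : Fin N, u j = u k → v j = v k → j = k)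
    (ρ σ : Fin 3 → ℝ) (d e : Fin 2 → ℝ) (α β : Fin N → ℝ)
    (E1 : ∀ j, u j - u i = α j * (ρ 0 * d 0) + β j * (σ 0 * e 0))
    (E2 : ∀ j, v j - v i = α j * (ρ 0 * d 1) + β j * (σ 0 * e 1))
    (E3 : ∀ j, a (v j) - a (v i) = α j * (ρ 1 * d 0) + β j * (σ 1 * e 0))
    (t1 : ρ 1 * d 1 = ρ 0 * d 0) (t2 : σ 1 * e 1 = σ 0 * e 0)
    (hd0 : d 0 ≠ 0) (he0 : e 0 ≠ 0)
    (hD : ρ 0 * σ 1 - ρ 1 * σ 0 = 0) (hρ0 : ρ 0 = 0) : False := by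
  by_cases hρ1 : ρ 1 = 0
  · by_cases hσ0 : σ 0 = 0
    · -- h ≡ 0 and r ≡ 0
      have hH0 : ∀ j, u j = u i := fun j => by
        have h := E1 j; rw [hρ0, hσ0] at h; simp at h; linarith
      have hr0 : ∀ j, v j = v i := fun j => by
        have h := E2 j; rw [hρ0, hσ0] at h; simp at h; linarith
      exact eq_contra hN u v i hUV hH0 hr0
    · by_cases he1 : e 1 = 0
      · -- t2 : σ 1 * 0 = σ 0 * e 0 contradiction
        rw [he1] at t2
        simp at t2
        rcases t2 with h | h
        · exact hσ0 h
        · exact he0 h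
      · -- a-case
        have hH : ∀ j, u j - u i = (e 0 / e 1) * (v j - v i) := by
          apply mk_lin2 (fun j => u j - u i) (fun j => v j - v i) α β
            (ρ 0 * d 0) (σ 0 * e 0) (ρ 0 * d 1) (σ 0 * e 1) (e 0 / e 1) E1 E2
          · rw [hρ0]; ring
          · field_simp <;> ring
        have hA : ∀ j, a (v j) - a (v i) = (σ 1 * e 0 / (σ 0 * e 1)) * (v j - v i) := by
          apply mk_lin2 (fun j => a (v j) - a (v i)) (fun j => v j - v i) α β
            (ρ 1 * d 0) (σ 1 * e 0) (ρ 0 * d 1) (σ 0 * e 1) (σ 1 * e 0 / (σ 0 * e 1)) E3 E2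
          · rw [hρ0, hρ1]; ring
          · field_simp <;> ring
        exact convA_contra a haconv hN u v i hUV _ _ hH hA
  · -- ρ 1 ≠ 0 forces σ 0 = 0 and d 1 = 0, so h ≡ 0 and r ≡ 0
    have hσ0 : σ 0 = 0 := by
      have h : ρ 1 * σ 0 = 0 := by linear_combination -hD + σ 1 * hρ0
      exact (mul_eq_zero.mp h).resolve_left hρ1
    have hd1 : d 1 = 0 := by
      have h : ρ 1 * d 1 = 0 := by rw [t1, hρ0]; ring
      exact (mul_eq_zero.mp h).resolve_left hρ1
    have hH0 : ∀ j, u j = u i := fun j => by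
      have h := E1 j; rw [hρ0, hσ0] at h; simp at h; linarith
    have hr0 : ∀ j, v j = v i := fun j => by
      have h := E2 j; rw [hρ0, hσ0] at h; simp at h; linarith
    exact eq_contra hN u v i hUV hH0 hr0

/-- The core case analysis. -/
lemma core
    (hainj : Function.Injective a)
    (haconv : StrictConvexOn ℝ Set.univ a)
    (hFconv : StrictConvexOn ℝ Set.univ F)
    {N : ℕ} (hN : 6 ≤ N) (u v : Fin N → ℝ) (i : Fin N)
    (hUV : ∀ j k : Fin N, u j = u k → v j = v k → j = k)
    (ρ σ : Fin 3 → ℝ) (d e : Fin 2 → ℝ) (α β : Fin N → ℝ)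
    (E1 : ∀ j, u j - u i = α j * (ρ 0 * d 0) + β j * (σ 0 * e 0))
    (E2 : ∀ j, v j - v i = α j * (ρ 0 * d 1) + β j * (σ 0 * e 1))
    (E3 : ∀ j, a (v j) - a (v i) = α j * (ρ 1 * d 0) + β j * (σ 1 * e 0))
    (E4 : ∀ j, u j - u i = α j * (ρ 1 * d 1) + β j * (σ 1 * e 1))
    (E5 : ∀ j, u j * a (v j) - u i * a (v i) = α j * (ρ 2 * d 0) + β j * (σ 2 * e 0))
    (E6 : ∀ j, u j ^ 2 / 2 + F (v j) - (u i ^ 2 / 2 + F (v i))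
      = α j * (ρ 2 * d 1) + β j * (σ 2 * e 1))
    (t1 : ρ 1 * d 1 = ρ 0 * d 0) (t2 : σ 1 * e 1 = σ 0 * e 0)
    (hd : ¬(d 0 = 0 ∧ d 1 = 0)) (he : ¬(e 0 = 0 ∧ e 1 = 0)) :
    ∃ a1 a2 l1 l2 : ℝ,
      (∀ j : Fin N,
        a (v j) - a (v i) = a1 * (u j - u i) + a2 * (v j - v i) ∧
        (u j - u i) * (a (v j) - a (v i)) =
          l1 * (u j - u i) + l2 * (a (v j) - a (v i)) ∧
        (u j - u i) ^ 2 / 2 + (F (v j) - F (v i) - a (v i) * (v j - v i)) =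
          l1 * (v j - v i) + l2 * (u j - u i)) ∨
      (∀ j : Fin N,
        v j - v i = a1 * (u j - u i) + a2 * (a (v j) - a (v i)) ∧
        (u j - u i) * (a (v j) - a (v i)) =
          l1 * (u j - u i) + l2 * (a (v j) - a (v i)) ∧
        (u j - u i) ^ 2 / 2 + (F (v j) - F (v i) - a (v i) * (v j - v i)) =
          l1 * (v j - v i) + l2 * (u j - u i)) := by
  by_cases hd0 : d 0 = 0
  · exact coreP1 a F hainj haconv hFconv hN u v i hUV ρ σ d e α β
      E1 E2 E3 E4 E5 E6 t1 t2 hd he hd0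
  by_cases he0 : e 0 = 0
  · exact coreP1 a F hainj haconv hFconv hN u v i hUV σ ρ e d β α
      (fun j => (E1 j).trans (add_comm _ _)) (fun j => (E2 j).trans (add_comm _ _))
      (fun j => (E3 j).trans (add_comm _ _)) (fun j => (E4 j).trans (add_comm _ _))
      (fun j => (E5 j).trans (add_comm _ _)) (fun j => (E6 j).trans (add_comm _ _))
      t2 t1 he hd he0
  by_cases hD : ρ 0 * σ 1 - ρ 1 * σ 0 = 0
  · by_cases hρ0 : ρ 0 = 0
    · exact absurd (core3rho a hainj haconv hN u v i hUV ρ σ d e α β E1 E2 E3 t1 t2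
        hd0 he0 hD hρ0) id
    by_cases hσ0 : σ 0 = 0
    · exact absurd (core3rho a hainj haconv hN u v i hUV σ ρ e d β α
        (fun j => (E1 j).trans (add_comm _ _)) (fun j => (E2 j).trans (add_comm _ _))
        (fun j => (E3 j).trans (add_comm _ _)) t2 t1 he0 hd0
        (by linear_combination -hD) hσ0) id
    · -- T3.2.2b : a-case contradiction
      exfalso
      have hprod1 : ρ 1 * d 1 ≠ 0 := by
        rw [t1]; exact mul_ne_zero hρ0 hd0
      have hρ1 : ρ 1 ≠ 0 := left_ne_zero_of_mul hprod1
      have hd1 : d 1 ≠ 0 := right_ne_zero_of_mul hprod1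
      have hσ1 : σ 1 ≠ 0 := by
        intro h
        apply mul_ne_zero hρ1 hσ0
        linear_combination -hD + ρ 0 * h
      have hprod2 : σ 1 * e 1 ≠ 0 := by
        rw [t2]; exact mul_ne_zero hσ0 he0
      have he1 : e 1 ≠ 0 := right_ne_zero_of_mul hprod2
      have hre : ρ 1 * e 1 = ρ 0 * e 0 := by
        apply mul_left_cancel₀ hσ0
        linear_combination ρ 0 * t2 - e 1 * hD
      have hpq : d 0 * e 1 = d 1 * e 0 := by
        apply mul_left_cancel₀ hρ0
        linear_combination d 1 * hre - e 1 * t1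
      have hH : ∀ j, u j - u i = (d 0 / d 1) * (v j - v i) := by
        apply mk_lin2 (fun j => u j - u i) (fun j => v j - v i) α β
          (ρ 0 * d 0) (σ 0 * e 0) (ρ 0 * d 1) (σ 0 * e 1) (d 0 / d 1) E1 E2
        · rw [div_mul_eq_mul_div, eq_div_iff hd1]; ring
        · rw [div_mul_eq_mul_div, eq_div_iff hd1]
          linear_combination (-(σ 0 : ℝ)) * hpq
      have hA : ∀ j, a (v j) - a (v i) = ((ρ 1 * d 0) / (ρ 0 * d 1)) * (v j - v i) := by
        apply mk_lin2 (fun j => a (v j) - a (v i)) (fun j => v j - v i) α β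
          (ρ 1 * d 0) (σ 1 * e 0) (ρ 0 * d 1) (σ 0 * e 1) ((ρ 1 * d 0) / (ρ 0 * d 1)) E3 E2
        · rw [div_mul_cancel₀ _ (mul_ne_zero hρ0 hd1)]
        · rw [div_mul_eq_mul_div, eq_div_iff (mul_ne_zero hρ0 hd1)]
          linear_combination (e 0 * d 1) * hD - (ρ 1 * σ 0) * hpq
      exact convA_contra a haconv hN u v i hUV _ _ hH hA
  · -- D ≠ 0 : alternative 2
    set Pc := ρ 2 - u i * ρ 1 - a (v i) * ρ 0 with hPc
    set Qc := σ 2 - u i * σ 1 - a (v i) * σ 0 with hQc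
    set D := ρ 0 * σ 1 - ρ 1 * σ 0 with hDdef
    refine ⟨((ρ 0 * d 1 / d 0) * σ 1 - (σ 0 * e 1 / e 0) * ρ 1) / D,
      (ρ 0 * (σ 0 * e 1 / e 0) - σ 0 * (ρ 0 * d 1 / d 0)) / D,
      (Pc * σ 1 - Qc * ρ 1) / D, (ρ 0 * Qc - σ 0 * Pc) / D, Or.inr ?_⟩
    have x1 : (((ρ 0 * d 1 / d 0) * σ 1 - (σ 0 * e 1 / e 0) * ρ 1) / D) * (ρ 0 * d 0)
        + ((ρ 0 * (σ 0 * e 1 / e 0) - σ 0 * (ρ 0 * d 1 / d 0)) / D) * (ρ 1 * d 0)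
        = ρ 0 * d 1 := by
      field_simp; rw [hDdef]; ring
    have x2 : (((ρ 0 * d 1 / d 0) * σ 1 - (σ 0 * e 1 / e 0) * ρ 1) / D) * (σ 0 * e 0)
        + ((ρ 0 * (σ 0 * e 1 / e 0) - σ 0 * (ρ 0 * d 1 / d 0)) / D) * (σ 1 * e 0)
        = σ 0 * e 1 := by
      field_simp; rw [hDdef]; ring
    have lc1 : ((Pc * σ 1 - Qc * ρ 1) / D) * ρ 0 + ((ρ 0 * Qc - σ 0 * Pc) / D) * ρ 1 = Pc := by
      field_simp; rw [hDdef]; ring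
    have lc2 : ((Pc * σ 1 - Qc * ρ 1) / D) * σ 0 + ((ρ 0 * Qc - σ 0 * Pc) / D) * σ 1 = Qc := by
      field_simp; rw [hDdef]; ring
    have hlam := finish_lam a F u v i ρ σ d e α β E1 E2 E3 E4 E5 E6 _ _ lc1 lc2
    have halt := finish2 a u v i ρ σ d e α β E1 E2 E3 _ _ x1 x2
    exact fun j => ⟨halt j, (hlam j).1, (hlam j).2⟩

end Core


def phi11 : Matrix (Fin 3) (Fin 2) ℝ →ₗ[ℝ] ℝ where
  toFun M := M 1 1 - M 0 0
  map_add' M N := by simp [Matrix.add_apply]; ring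
  map_smul' c M := by simp [Matrix.smul_apply]; ring

/-- **Lemma (2D case).** If `a ∈ C²` with `a' > 0`, `a'' > 0`, `F' = a`, `N ≥ 6`, the
`N` distinct points `X_i = P(u_i, v_i) ∈ K_a` satisfy
`dim Span{X_1 - X_i, …, X_N - X_i} = 2` for every `i`, and `X` has an order forming a
`T_N` configuration, then for each `i` there are constants `α₁^i, α₂^i, λ₁^i, λ₂^i`
such that either `a^i(r_j^i) = α₁^i h_j^i + α₂^i r_j^i` together with the two
`λ`-equations holds for all `j`, or `r_j^i = α₁^i h_j^i + α₂^i a^i(r_j^i)` together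
with the two `λ`-equations holds for all `j`. -/
theorem stmt_12 (a F : ℝ → ℝ)
    (ha : ContDiff ℝ 2 a)
    (ha' : ∀ x : ℝ, 0 < deriv a x)
    (ha'' : ∀ x : ℝ, 0 < deriv (deriv a) x)
    (hF : ∀ x : ℝ, HasDerivAt F (a x) x)
    (N : ℕ) (hN : 6 ≤ N)
    (u v : Fin N → ℝ)
    (X : Fin N → Matrix (Fin 3) (Fin 2) ℝ)
    (hX : ∀ i, X i = Pmat a F (u i) (v i))
    (hdist : Function.Injective X)
    (hdim : ∀ i : Fin N,
      Module.finrank ℝ (Submodule.span ℝ (Set.range fun j => X j - X i)) = 2)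
    (hTN : HasTNOrder X) :
    ∀ i : Fin N, ∃ a1 a2 l1 l2 : ℝ,
      (∀ j : Fin N,
        a (v j) - a (v i) = a1 * (u j - u i) + a2 * (v j - v i) ∧
        (u j - u i) * (a (v j) - a (v i)) =
          l1 * (u j - u i) + l2 * (a (v j) - a (v i)) ∧
        (u j - u i) ^ 2 / 2 + (F (v j) - F (v i) - a (v i) * (v j - v i)) =
          l1 * (v j - v i) + l2 * (u j - u i)) ∨
      (∀ j : Fin N,
        v j - v i = a1 * (u j - u i) + a2 * (a (v j) - a (v i)) ∧
        (u j - u i) * (a (v j) - a (v i)) =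
          l1 * (u j - u i) + l2 * (a (v j) - a (v i)) ∧
        (u j - u i) ^ 2 / 2 + (F (v j) - F (v i) - a (v i) * (v j - v i)) =
          l1 * (v j - v i) + l2 * (u j - u i)) := by
  -- analytic facts
  have hamono : StrictMono a := strictMono_of_deriv_pos ha'
  have hainj : Function.Injective a := hamono.injective
  have haconv : StrictConvexOn ℝ Set.univ a :=
    (strictMono_of_deriv_pos ha'').strictConvexOn_univ_of_deriv ha.continuous
  have hFcont : Continuous F := by
    have : Differentiable ℝ F := fun x => (hF x).differentiableAt
    exact this.continuous
  have hFderiv : deriv F = a := funext fun x => (hF x).deriv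
  have hFconv : StrictConvexOn ℝ Set.univ F := by
    apply StrictMono.strictConvexOn_univ_of_deriv hFcont
    rw [hFderiv]; exact hamono
  intro i
  have hUV : ∀ j k : Fin N, u j = u k → v j = v k → j = k := fun j k h1 h2 =>
    hdist (by rw [hX j, hX k, h1, h2])
  set V := Submodule.span ℝ (Set.range fun j => X j - X i) with hV
  have hVgen : ∀ j, X j - X i ∈ V := fun j => Submodule.subset_span ⟨j, rfl⟩
  have hVdiff : ∀ j k : Fin N, X j - X k ∈ V := fun j k => by
    rw [← sub_sub_sub_cancel_right (X j) (X k) (X i)]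
    exact sub_mem (hVgen j) (hVgen k)
  obtain ⟨R1, R2, hR1V, hR2V, hR1r, hR2r, hLI⟩ := TN_step hN X V hVdiff hTN
  -- span {R1, R2} = V
  have hsp : Submodule.span ℝ {R1, R2} = V := by
    apply Submodule.eq_of_le_of_finrank_le
    · rw [Submodule.span_le, Set.insert_subset_iff, Set.singleton_subset_iff]
      exact ⟨hR1V, hR2V⟩
    · rw [hdim i]
      have hrg : Set.range ![R1, R2] = {R1, R2} := by
        simp [Matrix.range_cons, Matrix.range_empty]
        exact Set.pair_comm R2 R1
      rw [show ({R1, R2} : Set (Matrix (Fin 3) (Fin 2) ℝ)) = Set.range ![R1, R2] from hrg.symm,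
        finrank_span_eq_card hLI]
      simp
  have hco : ∀ j, ∃ ab : ℝ × ℝ, ab.1 • R1 + ab.2 • R2 = X j - X i := by
    intro j
    have hmem : X j - X i ∈ Submodule.span ℝ {R1, R2} := by rw [hsp]; exact hVgen j
    rw [Submodule.mem_span_pair] at hmem
    obtain ⟨c, dd, h⟩ := hmem
    exact ⟨(c, dd), h⟩
  choose ab hab using hco
  obtain ⟨ρ, d, hρd⟩ := rank_one_fact R1 hR1r
  obtain ⟨σ, e, hσe⟩ := rank_one_fact R2 hR2r
  -- entry equations
  have hEnt : ∀ (j : Fin N) (k : Fin 3) (l : Fin 2),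
      (X j - X i) k l = (ab j).1 * (ρ k * d l) + (ab j).2 * (σ k * e l) := by
    intro j k l
    have h := congr_fun (congr_fun (hab j) k) l
    rw [← h, hρd, hσe]
    simp [Matrix.add_apply, Matrix.smul_apply]
  have hPsub : ∀ (j : Fin N) (k : Fin 3) (l : Fin 2),
      (X j - X i) k l = Pmat a F (u j) (v j) k l - Pmat a F (u i) (v i) k l := by
    intro j k l
    rw [hX j, hX i, Matrix.sub_apply]
  have E1 : ∀ j, u j - u i = (ab j).1 * (ρ 0 * d 0) + (ab j).2 * (σ 0 * e 0) := fun j => by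
    have h := hEnt j 0 0; rw [hPsub j 0 0] at h; exact h
  have E2 : ∀ j, v j - v i = (ab j).1 * (ρ 0 * d 1) + (ab j).2 * (σ 0 * e 1) := fun j => by
    have h := hEnt j 0 1; rw [hPsub j 0 1] at h; exact h
  have E3 : ∀ j, a (v j) - a (v i) = (ab j).1 * (ρ 1 * d 0) + (ab j).2 * (σ 1 * e 0) :=
    fun j => by have h := hEnt j 1 0; rw [hPsub j 1 0] at h; exact h
  have E4 : ∀ j, u j - u i = (ab j).1 * (ρ 1 * d 1) + (ab j).2 * (σ 1 * e 1) := fun j => by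
    have h := hEnt j 1 1; rw [hPsub j 1 1] at h; exact h
  have E5 : ∀ j, u j * a (v j) - u i * a (v i)
      = (ab j).1 * (ρ 2 * d 0) + (ab j).2 * (σ 2 * e 0) := fun j => by
    have h := hEnt j 2 0; rw [hPsub j 2 0] at h; exact h
  have E6 : ∀ j, u j ^ 2 / 2 + F (v j) - (u i ^ 2 / 2 + F (v i))
      = (ab j).1 * (ρ 2 * d 1) + (ab j).2 * (σ 2 * e 1) := fun j => by
    have h := hEnt j 2 1; rw [hPsub j 2 1] at h; exact h
  -- the φ functional vanishes on V
  have hφ : ∀ x ∈ V, phi11 x = 0 := by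
    intro x hx
    have hle : V ≤ LinearMap.ker phi11 := by
      rw [hV, Submodule.span_le]
      rintro y ⟨j, rfl⟩
      simp only [SetLike.mem_coe, LinearMap.mem_ker]
      show (X j - X i) 1 1 - (X j - X i) 0 0 = 0
      rw [hPsub j 1 1, hPsub j 0 0]
      show (u j - u i) - (u j - u i) = 0
      ring
    exact hle hx
  have t1 : ρ 1 * d 1 = ρ 0 * d 0 := by
    have h := hφ R1 hR1V
    rw [hρd] at h
    have : ρ 1 * d 1 - ρ 0 * d 0 = 0 := h
    linarith
  have t2 : σ 1 * e 1 = σ 0 * e 0 := by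
    have h := hφ R2 hR2V
    rw [hσe] at h
    have : σ 1 * e 1 - σ 0 * e 0 = 0 := h
    linarith
  -- d, e nonzero
  have hR1ne : R1 ≠ 0 := by
    have := hLI.ne_zero 0
    simpa using this
  have hR2ne : R2 ≠ 0 := by
    have := hLI.ne_zero 1
    simpa using this
  have hd : ¬(d 0 = 0 ∧ d 1 = 0) := by
    rintro ⟨h0, h1⟩
    apply hR1ne
    rw [hρd]
    ext k l
    fin_cases l <;> simp [h0, h1]
  have he : ¬(e 0 = 0 ∧ e 1 = 0) := by
    rintro ⟨h0, h1⟩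
    apply hR2ne
    rw [hσe]
    ext k l
    fin_cases l <;> simp [h0, h1]
  exact core a F hainj haconv hFconv hN u v i hUV ρ σ d e
    (fun j => (ab j).1) (fun j => (ab j).2) E1 E2 E3 E4 E5 E6 t1 t2 hd he
end
end

section
/- Let k = 10⁸ and define a: ℝ → ℝ by a(t) = e^t − 1 for t ≤ 0 and a(t) = (k/6)·t³ + (1/2)·t² + t for t > 0, and F: ℝ → ℝ by F(t) = e^t − t − 1 for t ≤ 0 and F(t) = (k/24)·t⁴ + (1/6)·t³ + (1/2)·t² for t > 0 (so that F' = a and a(0) = F(0) = 0). Let λ₁ = −1/2 and λ₂ = 1/10. Then the system of equations u·a(v) = λ₁·u + λ₂·a(v) and u²/2 + F(v) = λ₁·v + λ₂·u has at least 6 distinct solutions (u,v) ∈ ℝ², including the trivial solution (0,0). -/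
private lemma exp_ub_aux {q : ℝ} (hq : 0 < q) (hq1 : q < 1) : Real.exp q ≤ 1 / (1 - q) := by
  have h := Real.add_one_le_exp (-q)
  rw [Real.exp_neg] at h
  have hp := Real.exp_pos q
  have := mul_le_mul_of_nonneg_left h hp.le
  rw [mul_inv_cancel₀ hp.ne'] at this
  rw [le_div_iff₀ (by linarith)]
  nlinarith

private lemma e1_lb : (1.1025:ℝ) ≤ Real.exp (1/10) := by
  have h := Real.add_one_le_exp (1/20 : ℝ)
  have h2 : Real.exp (1/10) = Real.exp (1/20) * Real.exp (1/20) := by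
    rw [← Real.exp_add]; norm_num
  nlinarith [Real.exp_pos (1/20 : ℝ)]

private lemma e1_ub : Real.exp (1/10) ≤ 10/9 := by
  have := exp_ub_aux (q := 1/10) (by norm_num) (by norm_num)
  linarith [this]

private lemma e2_lb : (1.2155:ℝ) ≤ Real.exp (1/5) := by
  have h2 : Real.exp (1/5) = Real.exp (1/10) * Real.exp (1/10) := by
    rw [← Real.exp_add]; norm_num
  nlinarith [e1_lb, Real.exp_pos (1/10 : ℝ)]

private lemma e2_ub : Real.exp (1/5) ≤ 5/4 := by
  have := exp_ub_aux (q := 1/5) (by norm_num) (by norm_num)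
  linarith [this]

/-- box inequality for the point v = -log 2 - 1/10 -/
private lemma box3 {x v : ℝ} (hx1 : 0.4499 ≤ x) (hx2 : x ≤ 0.4536)
    (hv1 : -0.7932 ≤ v) (hv2 : v ≤ -0.7931) :
    0 < (x-1)^2/200 + (x - v - 1 + v/2)*(x-1/2)^2 - (x-1)*(x-1/2)/100 := by
  nlinarith [sq_nonneg (x - 0.4518), sq_nonneg (x-1/2),
    mul_nonneg (sub_nonneg.mpr hx1) (sub_nonneg.mpr hx2),
    mul_nonneg (sub_nonneg.mpr hv1) (sub_nonneg.mpr hv2)]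

private lemma box4 {x v : ℝ} (hx1 : 0.55125 ≤ x) (hx2 : x ≤ 0.5556)
    (hv1 : -0.5932 ≤ v) (hv2 : v ≤ -0.5931) :
    0 < (x-1)^2/200 + (x - v - 1 + v/2)*(x-1/2)^2 - (x-1)*(x-1/2)/100 := by
  nlinarith [sq_nonneg (x - 0.553), sq_nonneg (x-1/2)]

private lemma box5 {x v : ℝ} (hx1 : 0.6077 ≤ x) (hx2 : x ≤ 0.625)
    (hv1 : -0.49315 ≤ v) (hv2 : v ≤ -0.49314) :
    (x-1)^2/200 + (x - v - 1 + v/2)*(x-1/2)^2 - (x-1)*(x-1/2)/100 < 0 := by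
  nlinarith [sq_nonneg (x - 0.616), sq_nonneg (x-1/2)]

set_option maxHeartbeats 10000000 in
/-- For `k = 10⁸`, the piecewise functions `a` and `F` (with `F' = a`,
`a(0) = F(0) = 0`) and `λ₁ = -1/2`, `λ₂ = 1/10`, the system
`u·a(v) = λ₁ u + λ₂ a(v)`, `u²/2 + F(v) = λ₁ v + λ₂ u` has at least `6` distinct
solutions, including the trivial solution `(0,0)`. -/
theorem stmt_18 (k : ℝ) (hk : k = 10 ^ 8)
    (a F : ℝ → ℝ)
    (hadef : ∀ t : ℝ,
      a t = if t ≤ 0 then Real.exp t - 1 else k / 6 * t ^ 3 + 1 / 2 * t ^ 2 + t)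
    (hFdef : ∀ t : ℝ,
      F t = if t ≤ 0 then Real.exp t - t - 1
        else k / 24 * t ^ 4 + 1 / 6 * t ^ 3 + 1 / 2 * t ^ 2)
    (l1 l2 : ℝ) (hl1 : l1 = -(1 / 2)) (hl2 : l2 = 1 / 10) :
    ∃ S : Finset (ℝ × ℝ), 6 ≤ S.card ∧ ((0 : ℝ), (0 : ℝ)) ∈ S ∧
      ∀ p ∈ S, p.1 * a p.2 = l1 * p.1 + l2 * a p.2 ∧
        p.1 ^ 2 / 2 + F p.2 = l1 * p.2 + l2 * p.1 := by
  subst hk hl1 hl2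
  set L := Real.log 2 with hL
  have hL1 : (0.6931471803:ℝ) < L := Real.log_two_gt_d9
  have hL2 : L < 0.6931471808 := Real.log_two_lt_d9
  have hexpL : Real.exp (-L) = 1/2 := by
    rw [Real.exp_neg, Real.exp_log two_pos]; norm_num
  -- the function H (denominator-cleared second equation)
  set H : ℝ → ℝ := fun v =>
    (a v)^2/200 + (F v + v/2)*(a v + 1/2)^2 - (a v)*(a v + 1/2)/100 with hHdef
  -- exp-side version
  set He : ℝ → ℝ := fun v =>
    (Real.exp v - 1)^2/200 + (Real.exp v - v - 1 + v/2)*(Real.exp v - 1/2)^2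
      - (Real.exp v - 1)*(Real.exp v - 1/2)/100 with hHe
  have hHeq : ∀ v : ℝ, v ≤ 0 → H v = He v := by
    intro v hv
    simp only [hHdef, hHe, hadef v, hFdef v, if_pos hv]
    ring
  -- polynomial-side version
  set Hp : ℝ → ℝ := fun v =>
    ((10:ℝ)^8 / 6 * v ^ 3 + 1 / 2 * v ^ 2 + v)^2/200
      + (((10:ℝ)^8 / 24 * v ^ 4 + 1 / 6 * v ^ 3 + 1 / 2 * v ^ 2) + v/2)
        * (((10:ℝ)^8 / 6 * v ^ 3 + 1 / 2 * v ^ 2 + v) + 1/2)^2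
      - ((10:ℝ)^8 / 6 * v ^ 3 + 1 / 2 * v ^ 2 + v)
        * (((10:ℝ)^8 / 6 * v ^ 3 + 1 / 2 * v ^ 2 + v) + 1/2)/100 with hHp
  have hHpeq : ∀ v : ℝ, 0 < v → H v = Hp v := by
    intro v hv
    simp only [hHdef, hHp, hadef v, hFdef v, if_neg (not_le.mpr hv)]
  have hHec : Continuous He := by fun_prop
  have hHpc : Continuous Hp := by fun_prop
  -- the six roots
  -- v1 ∈ (-3L, -2L)
  have hx3 : Real.exp (-(3*L)) = 1/8 := by
    rw [show -(3*L) = (-L) + (-L) + (-L) by ring, Real.exp_add, Real.exp_add, hexpL]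
    norm_num
  have hx2 : Real.exp (-(2*L)) = 1/4 := by
    rw [show -(2*L) = (-L) + (-L) by ring, Real.exp_add, hexpL]; norm_num
  have hv1ex : ∃ v ∈ Set.Ioo (-(3*L)) (-(2*L)), He v = 0 := by
    have hmem : (0:ℝ) ∈ Set.Ioo (He (-(2*L))) (He (-(3*L))) := by
      constructor
      · simp only [hHe, hx2]; nlinarith
      · simp only [hHe, hx3]; nlinarith
    have := intermediate_value_Ioo' (by nlinarith : -(3*L) ≤ -(2*L))
      hHec.continuousOn hmem
    obtain ⟨v, hv, hveq⟩ := this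
    exact ⟨v, hv, hveq⟩
  -- v2 ∈ (-2L, -L - 1/10)
  have hxm : Real.exp (-L - 1/10) = 1/(2 * Real.exp (1/10)) := by
    rw [Real.exp_sub, hexpL]; field_simp
  have hxbm1 : (0.4499:ℝ) ≤ Real.exp (-L - 1/10) := by
    rw [hxm]
    rw [le_div_iff₀ (by positivity)]
    nlinarith [e1_ub]
  have hxbm2 : Real.exp (-L - 1/10) ≤ 0.4536 := by
    rw [hxm, div_le_iff₀ (by positivity)]
    nlinarith [e1_lb]
  have hv2ex : ∃ v ∈ Set.Ioo (-(2*L)) (-L - 1/10), He v = 0 := by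
    have hmem : (0:ℝ) ∈ Set.Ioo (He (-(2*L))) (He (-L - 1/10)) := by
      constructor
      · simp only [hHe, hx2]; nlinarith
      · simp only [hHe]
        exact box3 hxbm1 hxbm2 (by nlinarith) (by nlinarith)
    have := intermediate_value_Ioo (by nlinarith : -(2*L) ≤ -L - 1/10)
      hHec.continuousOn hmem
    obtain ⟨v, hv, hveq⟩ := this
    exact ⟨v, hv, hveq⟩
  -- v3 ∈ (-L + 1/10, -L + 1/5)
  have hxp1 : Real.exp (-L + 1/10) = Real.exp (1/10) / 2 := by
    rw [Real.exp_add, hexpL]; ring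
  have hxp2 : Real.exp (-L + 1/5) = Real.exp (1/5) / 2 := by
    rw [Real.exp_add, hexpL]; ring
  have hv3ex : ∃ v ∈ Set.Ioo (-L + 1/10) (-L + 1/5), He v = 0 := by
    have hmem : (0:ℝ) ∈ Set.Ioo (He (-L + 1/5)) (He (-L + 1/10)) := by
      constructor
      · simp only [hHe, hxp2]
        exact box5 (by nlinarith [e2_lb]) (by nlinarith [e2_ub])
          (by nlinarith) (by nlinarith)
      · simp only [hHe, hxp1]
        exact box4 (by nlinarith [e1_lb]) (by nlinarith [e1_ub])
          (by nlinarith) (by nlinarith)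
    have := intermediate_value_Ioo' (by nlinarith : -L + 1/10 ≤ -L + 1/5)
      hHec.continuousOn hmem
    obtain ⟨v, hv, hveq⟩ := this
    exact ⟨v, hv, hveq⟩
  -- v5 ∈ (1/1000, 13/10000)
  have hv5ex : ∃ v ∈ Set.Ioo (1/1000 : ℝ) (13/10000), Hp v = 0 := by
    have hmem : (0:ℝ) ∈ Set.Ioo (Hp (13/10000)) (Hp (1/1000)) := by
      constructor
      · simp only [hHp]; norm_num
      · simp only [hHp]; norm_num
    have := intermediate_value_Ioo' (by norm_num : (1/1000:ℝ) ≤ 13/10000)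
      hHpc.continuousOn hmem
    obtain ⟨v, hv, hveq⟩ := this
    exact ⟨v, hv, hveq⟩
  -- v6 ∈ (3/1000, 1/200)
  have hv6ex : ∃ v ∈ Set.Ioo (3/1000 : ℝ) (1/200), Hp v = 0 := by
    have hmem : (0:ℝ) ∈ Set.Ioo (Hp (3/1000)) (Hp (1/200)) := by
      constructor
      · simp only [hHp]; norm_num
      · simp only [hHp]; norm_num
    have := intermediate_value_Ioo (by norm_num : (3/1000:ℝ) ≤ 1/200)
      hHpc.continuousOn hmem
    obtain ⟨v, hv, hveq⟩ := this
    exact ⟨v, hv, hveq⟩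
  obtain ⟨v1, hv1m, hv1z⟩ := hv1ex
  obtain ⟨v2, hv2m, hv2z⟩ := hv2ex
  obtain ⟨v3, hv3m, hv3z⟩ := hv3ex
  obtain ⟨v5, hv5m, hv5z⟩ := hv5ex
  obtain ⟨v6, hv6m, hv6z⟩ := hv6ex
  -- basic facts
  have ha0 : a 0 = 0 := by rw [hadef]; simp
  have hF0 : F 0 = 0 := by rw [hFdef]; simp
  have hH0 : H 0 = 0 := by simp [hHdef, ha0, hF0]
  -- H v = 0 for all roots
  have hv1neg : v1 < 0 := by nlinarith [hv1m.2]
  have hv2neg : v2 < 0 := by nlinarith [hv2m.2]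
  have hv3neg : v3 < 0 := by nlinarith [hv3m.2]
  have hH1 : H v1 = 0 := by rw [hHeq v1 hv1neg.le]; exact hv1z
  have hH2 : H v2 = 0 := by rw [hHeq v2 hv2neg.le]; exact hv2z
  have hH3 : H v3 = 0 := by rw [hHeq v3 hv3neg.le]; exact hv3z
  have hH5 : H v5 = 0 := by rw [hHpeq v5 (by linarith [hv5m.1])]; exact hv5z
  have hH6 : H v6 = 0 := by rw [hHpeq v6 (by linarith [hv6m.1])]; exact hv6z
  -- nonvanishing denominators
  have hane : ∀ v : ℝ, v ≤ 0 → Real.exp v ≠ 1/2 → a v + 1/2 ≠ 0 := by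
    intro v hv hne
    rw [hadef, if_pos hv]
    intro h; apply hne; linarith
  have hexp_lt : ∀ v : ℝ, v < -L → Real.exp v < 1/2 := by
    intro v hv
    calc Real.exp v < Real.exp (-L) := Real.exp_lt_exp.mpr hv
    _ = 1/2 := hexpL
  have hexp_gt : ∀ v : ℝ, -L < v → 1/2 < Real.exp v := by
    intro v hv
    calc (1/2:ℝ) = Real.exp (-L) := hexpL.symm
    _ < Real.exp v := Real.exp_lt_exp.mpr hv
  have hne1 : a v1 + 1/2 ≠ 0 :=
    hane v1 hv1neg.le (ne_of_lt (hexp_lt v1 (by nlinarith [hv1m.2])))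
  have hne2 : a v2 + 1/2 ≠ 0 :=
    hane v2 hv2neg.le (ne_of_lt (hexp_lt v2 (by nlinarith [hv2m.2])))
  have hne3 : a v3 + 1/2 ≠ 0 :=
    hane v3 hv3neg.le (ne_of_gt (hexp_gt v3 (by nlinarith [hv3m.1])))
  have hne0 : a 0 + 1/2 ≠ 0 := by rw [ha0]; norm_num
  have hapos : ∀ v : ℝ, 0 < v → 0 < a v := by
    intro v hv
    rw [hadef, if_neg (not_le.mpr hv)]
    positivity
  have hne5 : a v5 + 1/2 ≠ 0 := by
    have := hapos v5 (by linarith [hv5m.1]); linarith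
  have hne6 : a v6 + 1/2 ≠ 0 := by
    have := hapos v6 (by linarith [hv6m.1]); linarith
  -- solution map
  set f : ℝ → ℝ × ℝ := fun v => (a v / (10 * (a v + 1/2)), v) with hf
  have hfinj : Function.Injective f := by
    intro x y h
    exact congrArg Prod.snd h
  -- the key solution lemma
  have key : ∀ v : ℝ, a v + 1/2 ≠ 0 → H v = 0 →
      (f v).1 * a (f v).2 = -(1/2) * (f v).1 + 1/10 * a (f v).2 ∧
      (f v).1 ^ 2 / 2 + F (f v).2 = -(1/2) * (f v).2 + 1/10 * (f v).1 := by
    intro v hne hHv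
    simp only [hf]
    simp only [hHdef] at hHv
    have hd : (10:ℝ) * (a v + 1/2) ≠ 0 := by
      exact mul_ne_zero (by norm_num) hne
    obtain ⟨u, hu⟩ : ∃ u : ℝ, u = a v / (10 * (a v + 1/2)) := ⟨_, rfl⟩
    rw [← hu]
    have huu : u * (10 * (a v + 1/2)) = a v := by
      rw [hu]; exact div_mul_cancel₀ _ hd
    have hsq : u^2 * (10 * (a v + 1/2))^2 = (a v)^2 := by
      rw [← mul_pow, huu]
    have expand : (u^2/2 + F v + v/2 - u/10) * (10 * (a v + 1/2))^2 =
        100 * ((a v)^2/200 + (F v + v/2)*(a v + 1/2)^2 - (a v)*(a v + 1/2)/100) := by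
      linear_combination (1/2 : ℝ) * hsq - (a v + 1/2) * huu
    have hzero : (u^2/2 + F v + v/2 - u/10) * (10 * (a v + 1/2))^2 = 0 := by
      rw [expand, hHv, mul_zero]
    have hG : u^2/2 + F v + v/2 - u/10 = 0 := by
      rcases mul_eq_zero.mp hzero with h | h
      · exact h
      · exact absurd h (pow_ne_zero _ hd)
    constructor
    · linear_combination (1/10 : ℝ) * huu
    · linarith [hG]
  -- ordering of roots
  have hord1 : v1 < v2 := by nlinarith [hv1m.2, hv2m.1]
  have hord2 : v2 < v3 := by nlinarith [hv2m.2, hv3m.1]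
  have hord3 : v3 < 0 := hv3neg
  have hord4 : (0:ℝ) < v5 := by linarith [hv5m.1]
  have hord5 : v5 < v6 := by linarith [hv5m.2, hv6m.1]
  -- build the finset
  refine ⟨({v1, v2, v3, 0, v5, v6} : Finset ℝ).image f, ?_, ?_, ?_⟩
  · rw [Finset.card_image_of_injective _ hfinj]
    rw [Finset.card_insert_of_notMem (by
        simp only [Finset.mem_insert, Finset.mem_singleton]
        push_neg
        exact ⟨by linarith, by linarith, by linarith, by linarith, by linarith⟩),
      Finset.card_insert_of_notMem (by
        simp only [Finset.mem_insert, Finset.mem_singleton]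
        push_neg
        exact ⟨by linarith, by linarith, by linarith, by linarith⟩),
      Finset.card_insert_of_notMem (by
        simp only [Finset.mem_insert, Finset.mem_singleton]
        push_neg
        exact ⟨by linarith, by linarith, by linarith⟩),
      Finset.card_insert_of_notMem (by
        simp only [Finset.mem_insert, Finset.mem_singleton]
        push_neg
        exact ⟨by linarith, by linarith⟩),
      Finset.card_insert_of_notMem (by
        simp only [Finset.mem_singleton]
        exact by linarith),
      Finset.card_singleton]
  · rw [Finset.mem_image]
    refine ⟨0, by simp, ?_⟩
    simp only [hf, ha0]
    norm_num
  · intro p hp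
    rw [Finset.mem_image] at hp
    obtain ⟨v, hvmem, rfl⟩ := hp
    simp only [Finset.mem_insert, Finset.mem_singleton] at hvmem
    rcases hvmem with rfl | rfl | rfl | rfl | rfl | rfl
    · exact key _ hne1 hH1
    · exact key _ hne2 hH2
    · exact key _ hne3 hH3
    · exact key _ hne0 hH0
    · exact key _ hne5 hH5
    · exact key _ hne6 hH6
end
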